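/- arXiv:2311.02203 — 6 statements merged into one kernel-verified Lean document; each statement's English description precedes it below -/
import Mathlib

section
/- If P is a finite poset in which every non-minimal element is greater than at least two other elements, then P is sign-balanced, i.e., si(P) = 0. -/
/-- A linear extension of a finite poset `α` (with `n = |α|`) is an order-preserving
bijection `α ≃ Fin n`. -/
def IsLinearExtension {α : Type*} [PartialOrder α] {n : ℕ} (ℓ : α ≃ Fin n) : Prop :=
  ∀ x y : α, x ≤ y → ℓ x ≤ ℓ y

open scoped Classical in
/-- The signed sum of linear extensions of `α` with respect to a labeling `f`:
`Σ_{ℓ ∈ LE(α)} sgn(ℓ ∘ f⁻¹)`.  The sign imbalance is its absolute value. -/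
noncomputable def signedSum {α : Type*} [Fintype α] [PartialOrder α] {n : ℕ}
    (f : α ≃ Fin n) : ℤ :=
  ∑ ℓ : α ≃ Fin n,
    if IsLinearExtension ℓ then ((Equiv.Perm.sign (f.symm.trans ℓ) : ℤˣ) : ℤ) else 0

/-- If every non-minimal element of a finite poset is greater than at least two
other elements, the poset is sign-balanced. -/
theorem signBalanced_of_two_below {α : Type*} [Fintype α] [PartialOrder α]
    (hcard : 2 ≤ Fintype.card α)
    (h : ∀ x : α, ¬ IsMin x → ∃ y z : α, y ≠ z ∧ y < x ∧ z < x) :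
    ∀ f : α ≃ Fin (Fintype.card α), (signedSum f).natAbs = 0 := by
  classical
  intro f
  haveI : NeZero (Fintype.card α) := ⟨by omega⟩
  have v0 : ((0 : Fin (Fintype.card α)) : ℕ) = 0 := rfl
  have v1 : ((1 : Fin (Fintype.card α)) : ℕ) = 1 := by
    rw [Fin.val_one']
    exact Nat.mod_eq_of_lt (by omega)
  have h01 : (0 : Fin (Fintype.card α)) ≠ 1 := by
    intro hh
    have := congrArg Fin.val hh
    rw [v0, v1] at this
    omega
  set σ : Fin (Fintype.card α) ≃ Fin (Fintype.card α) := Equiv.swap 0 1 with hσ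
  have smono : ∀ ℓ : α ≃ Fin (Fintype.card α), IsLinearExtension ℓ → ∀ x y : α, x < y → ℓ x < ℓ y := by
    intro ℓ hℓ x y hxy
    exact lt_of_le_of_ne (hℓ x y hxy.le) (fun e => hxy.ne (ℓ.injective e))
  have key : ∀ ℓ : α ≃ Fin (Fintype.card α), IsLinearExtension ℓ → ∀ x y : α, x < y → ℓ x = 0 → ℓ y ≠ 1 := by
    intro ℓ hℓ x y hxy hx hy
    have hymin : ¬ IsMin y := fun hm => (hm hxy.le).not_gt hxy
    obtain ⟨a, b, hab, ha, hb⟩ := h y hymin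
    have h1 : ℓ a < 1 := hy ▸ smono ℓ hℓ a y ha
    have h2 : ℓ b < 1 := hy ▸ smono ℓ hℓ b y hb
    rw [Fin.lt_def, v1] at h1 h2
    have ha0 : ℓ a = 0 := by apply Fin.ext; rw [v0]; omega
    have hb0 : ℓ b = 0 := by apply Fin.ext; rw [v0]; omega
    exact hab (ℓ.injective (ha0.trans hb0.symm))
  have pres : ∀ ℓ : α ≃ Fin (Fintype.card α), IsLinearExtension ℓ → IsLinearExtension (ℓ.trans σ) := by
    intro ℓ hℓ x y hxy
    rcases eq_or_lt_of_le hxy with rfl | hlt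
    · exact le_refl _
    have hab : ℓ x < ℓ y := smono ℓ hℓ x y hlt
    simp only [Equiv.trans_apply, hσ]
    by_cases ha0 : ℓ x = 0
    · have hb1 : ℓ y ≠ 1 := key ℓ hℓ x y hlt ha0
      have hb0 : ℓ y ≠ 0 := by rw [← ha0]; exact hab.ne'
      rw [ha0, Equiv.swap_apply_left, Equiv.swap_apply_of_ne_of_ne hb0 hb1]
      rw [Fin.le_def, v1]
      have e0 : (ℓ y).val ≠ 0 := fun e => hb0 (Fin.ext (e.trans v0.symm))
      omega
    by_cases ha1 : ℓ x = 1
    · rw [ha1, Equiv.swap_apply_right, Fin.le_def, v0]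
      omega
    · rw [Equiv.swap_apply_of_ne_of_ne ha0 ha1]
      have hxv0 : (ℓ x).val ≠ 0 := fun e => ha0 (Fin.ext (e.trans v0.symm))
      have hxv1 : (ℓ x).val ≠ 1 := fun e => ha1 (Fin.ext (e.trans v1.symm))
      have habv := hab
      rw [Fin.lt_def] at habv
      have hb0 : ℓ y ≠ 0 := fun e => by
        have := congrArg Fin.val e; rw [v0] at this; omega
      have hb1 : ℓ y ≠ 1 := fun e => by
        have := congrArg Fin.val e; rw [v1] at this; omega
      rw [Equiv.swap_apply_of_ne_of_ne hb0 hb1]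
      exact hab.le
  have presIff : ∀ ℓ : α ≃ Fin (Fintype.card α), IsLinearExtension (ℓ.trans σ) ↔ IsLinearExtension ℓ := by
    intro ℓ
    constructor
    · intro hh
      have := pres _ hh
      have e : (ℓ.trans σ).trans σ = ℓ := by
        ext x; simp [hσ, Equiv.swap_apply_self]
      rwa [e] at this
    · exact pres ℓ
  set e : (α ≃ Fin (Fintype.card α)) ≃ (α ≃ Fin (Fintype.card α)) := Equiv.equivCongr (Equiv.refl α) σ with he
  have he' : ∀ ℓ : α ≃ Fin (Fintype.card α), e ℓ = ℓ.trans σ := by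
    intro ℓ; ext x; simp [he]
  have hsum : signedSum f = - signedSum f := by
    unfold signedSum
    conv_lhs => rw [← Equiv.sum_comp e]
    rw [← Finset.sum_neg_distrib]
    apply Finset.sum_congr rfl
    intro ℓ _
    rw [he']
    by_cases hl : IsLinearExtension ℓ
    · rw [if_pos ((presIff ℓ).mpr hl), if_pos hl]
      have assoc : f.symm.trans (ℓ.trans σ) = σ * (f.symm.trans ℓ) := by
        ext x; simp [Equiv.Perm.mul_apply]
      rw [assoc, Equiv.Perm.sign_mul, Equiv.Perm.sign_swap h01]
      push_cast
      ring
    · rw [if_neg (fun hh => hl ((presIff ℓ).mp hh)), if_neg hl, neg_zero]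
  have hz : signedSum f = 0 := by omega
  rw [hz]
  rfl
end

section
/- If P is a height ≤ 2 poset on an odd number 2n+1 of vertices with no isolated vertex and more minimal elements than maximal elements, then the number of linear extensions of P is even. -/
/-- A fixed-point-free involution on a finite type forces even cardinality. -/
lemma even_card_of_fpf {S : Type*} [Fintype S] (g : S → S)
    (h1 : ∀ x, g (g x) = x) (h2 : ∀ x, g x ≠ x) : Even (Fintype.card S) := by
  classical
  have hz : ((Fintype.card S : ZMod 2)) = 0 := by
    have : ∑ _x : S, (1 : ZMod 2) = 0 :=
      Finset.sum_ninvolution g (fun a => by decide) (fun a _ => h2 a)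
        (fun a => Finset.mem_univ _) h1
    simpa using this
  have : (2 : ℕ) ∣ Fintype.card S := (ZMod.natCast_eq_zero_iff _ 2).mp hz
  exact even_iff_two_dvd.mpr this

/-- position `m` in `Fin (2*n+1)` (for `m < 2*n+1`). -/
def posF (n m : ℕ) : Fin (2 * n + 1) := ⟨m % (2 * n + 1), Nat.mod_lt _ (by omega)⟩

lemma posF_val {n m : ℕ} (h : m < 2 * n + 1) : ((posF n m) : ℕ) = m := Nat.mod_eq_of_lt h

/-- Pair `k` is "bad" for `ℓ`: the elements at positions `2k, 2k+1` are incomparable. -/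
def BadP {α : Type*} [PartialOrder α] (n : ℕ) (ℓ : α ≃ Fin (2 * n + 1)) (k : ℕ) : Prop :=
  k < n ∧ ¬ (ℓ.symm (posF n (2 * k)) ≤ ℓ.symm (posF n (2 * k + 1)))

lemma exists_bad {α : Type*} [Fintype α] [PartialOrder α] (n : ℕ)
    (hcard : Fintype.card α = 2 * n + 1)
    (hheight : ¬ ∃ x y z : α, x < y ∧ y < z)
    (hiso : ∀ x : α, ∃ y : α, y ≠ x ∧ (y < x ∨ x < y))
    (hmin : Nat.card {x : α // IsMin x} > Nat.card {x : α // IsMax x})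
    (ℓ : α ≃ Fin (2 * n + 1)) (hℓ : IsLinearExtension ℓ) : ∃ k, BadP n ℓ k := by
  classical
  by_contra hno
  push_neg at hno
  have hcomp : ∀ k, k < n →
      ℓ.symm (posF n (2 * k)) ≤ ℓ.symm (posF n (2 * k + 1)) := by
    intro k hk
    by_contra hc
    exact (hno k) ⟨hk, hc⟩
  -- every element is min or max
  have hMM : ∀ x : α, IsMin x ∨ IsMax x := by
    intro x
    by_contra h
    push_neg at h
    obtain ⟨a, ha⟩ := not_isMin_iff.mp h.1
    obtain ⟨b, hb⟩ := not_isMax_iff.mp h.2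
    exact hheight ⟨a, x, b, ha, hb⟩
  -- cardinality bound
  have hsum : 2 * n + 1 ≤ Fintype.card {x : α // IsMin x} + Fintype.card {x : α // IsMax x} := by
    have h1 : Fintype.card {x : α // IsMin x ∨ IsMax x} = Fintype.card α :=
      Fintype.card_congr (Equiv.subtypeUnivEquiv hMM)
    have h2 := Fintype.card_subtype_or (fun x : α => IsMin x) (fun x : α => IsMax x)
    omega
  have hmin' : Fintype.card {x : α // IsMin x} > Fintype.card {x : α // IsMax x} := by
    simpa [Nat.card_eq_fintype_card] using hmin
  have hbig : n + 1 ≤ Fintype.card {x : α // IsMin x} := by omega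
  -- facts about minimal elements
  have hlast : ∀ x : α, IsMin x → ((ℓ x : ℕ)) ≠ 2 * n := by
    intro x hx hne
    obtain ⟨y, hy, hcase⟩ := hiso x
    rcases hcase with h | h
    · exact hy (le_antisymm h.le (hx h.le))
    · have := hℓ x y h.le
      have hne2 : ℓ x ≠ ℓ y := fun he => hy (ℓ.injective he).symm
      have : (ℓ x : ℕ) < (ℓ y : ℕ) := lt_of_le_of_ne (by exact_mod_cast this)
        (fun he => hne2 (Fin.ext he))
      have := (ℓ y).isLt
      omega
  have heven : ∀ x : α, IsMin x → ((ℓ x : ℕ)) % 2 = 0 := by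
    intro x hx
    by_contra hodd
    have hlt := (ℓ x).isLt
    obtain ⟨k, hk⟩ : ∃ k, (ℓ x : ℕ) = 2 * k + 1 := ⟨(ℓ x : ℕ) / 2, by omega⟩
    have hkn : k < n := by omega
    have hq : posF n (2 * k + 1) = ℓ x := by
      apply Fin.ext
      rw [posF_val (by omega)]
      exact hk.symm
    have hle := hcomp k hkn
    rw [hq, Equiv.symm_apply_apply] at hle
    have hxz := hx hle
    have := hℓ x _ hxz
    rw [Equiv.apply_symm_apply] at this
    have : (ℓ x : ℕ) ≤ 2 * k := by
      have h2 := posF_val (n := n) (m := 2 * k) (by omega)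
      calc (ℓ x : ℕ) ≤ (posF n (2 * k) : ℕ) := this
        _ = 2 * k := h2
    omega
  -- injection from minimal elements into Fin n
  have hF : Function.Injective (fun x : {x : α // IsMin x} =>
      (⟨(ℓ x.1 : ℕ) / 2, by
        have h1 := heven x.1 x.2
        have h2 := hlast x.1 x.2
        have h3 := (ℓ x.1).isLt
        omega⟩ : Fin n)) := by
    intro a b hab
    have h1 := heven a.1 a.2
    have h2 := heven b.1 b.2
    have hval : ((ℓ a.1 : ℕ)) / 2 = ((ℓ b.1 : ℕ)) / 2 := congrArg Fin.val hab
    have : (ℓ a.1 : ℕ) = (ℓ b.1 : ℕ) := by omega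
    exact Subtype.ext (ℓ.injective (Fin.ext this))
  have := Fintype.card_le_of_injective _ hF
  simp [Fintype.card_fin] at this
  omega

lemma swap_isLinExt {α : Type*} [PartialOrder α] {n : ℕ} (ℓ : α ≃ Fin (2 * n + 1))
    (hℓ : IsLinearExtension ℓ) {k : ℕ} (hk : k < n)
    (hbad : ¬ (ℓ.symm (posF n (2 * k)) ≤ ℓ.symm (posF n (2 * k + 1)))) :
    IsLinearExtension (ℓ.trans (Equiv.swap (posF n (2 * k)) (posF n (2 * k + 1)))) := by
  intro a b hab
  set P := posF n (2 * k) with hP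
  set Q := posF n (2 * k + 1) with hQ
  have hPv : (P : ℕ) = 2 * k := posF_val (by omega)
  have hQv : (Q : ℕ) = 2 * k + 1 := posF_val (by omega)
  simp only [Equiv.trans_apply]
  rcases eq_or_ne a b with rfl | hab'
  · exact le_refl _
  have h1 : (ℓ a : ℕ) < (ℓ b : ℕ) := by
    have := hℓ a b hab
    have hne : ℓ a ≠ ℓ b := fun he => hab' (ℓ.injective he)
    exact lt_of_le_of_ne this (fun he => hne (Fin.ext he))
  by_cases haP : ℓ a = P
  · by_cases hbQ : ℓ b = Q
    · exfalso
      apply hbad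
      have : ℓ.symm P = a := by rw [← haP, Equiv.symm_apply_apply]
      have h2 : ℓ.symm Q = b := by rw [← hbQ, Equiv.symm_apply_apply]
      rw [this, h2]; exact hab
    · have hbP : ℓ b ≠ P := fun he => by
        rw [haP, he] at h1; omega
      rw [haP, Equiv.swap_apply_left, Equiv.swap_apply_of_ne_of_ne hbP hbQ]
      rw [Fin.le_def, hQv]
      have : (ℓ b : ℕ) ≠ 2 * k + 1 := fun he => hbQ (Fin.ext (by rw [he, hQv]))
      rw [haP, hPv] at h1
      omega
  · by_cases haQ : ℓ a = Q
    · have hbP : ℓ b ≠ P := fun he => by rw [haQ, he, hQv, hPv] at h1; omega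
      have hbQ : ℓ b ≠ Q := fun he => by rw [haQ, he] at h1; omega
      rw [haQ, Equiv.swap_apply_right, Equiv.swap_apply_of_ne_of_ne hbP hbQ]
      rw [Fin.le_def, hPv]
      rw [haQ, hQv] at h1
      omega
    · rw [Equiv.swap_apply_of_ne_of_ne haP haQ]
      by_cases hbP : ℓ b = P
      · rw [hbP, Equiv.swap_apply_left, Fin.le_def, hQv]
        rw [hbP, hPv] at h1
        omega
      · by_cases hbQ : ℓ b = Q
        · rw [hbQ, Equiv.swap_apply_right, Fin.le_def, hPv]
          have : (ℓ a : ℕ) ≠ 2 * k := fun he => haP (Fin.ext (by rw [he, hPv]))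
          rw [hbQ, hQv] at h1
          omega
        · rw [Equiv.swap_apply_of_ne_of_ne hbP hbQ, Fin.le_def]
          omega

lemma badP_swap {α : Type*} [PartialOrder α] {n : ℕ} (ℓ : α ≃ Fin (2 * n + 1))
    (hℓ : IsLinearExtension ℓ) {j : ℕ} (hj : j < n)
    (hbad : ¬ (ℓ.symm (posF n (2 * j)) ≤ ℓ.symm (posF n (2 * j + 1)))) (k : ℕ) :
    BadP n (ℓ.trans (Equiv.swap (posF n (2 * j)) (posF n (2 * j + 1)))) k ↔ BadP n ℓ k := by
  set P := posF n (2 * j) with hP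
  set Q := posF n (2 * j + 1) with hQ
  have hPv : (P : ℕ) = 2 * j := posF_val (by omega)
  have hQv : (Q : ℕ) = 2 * j + 1 := posF_val (by omega)
  have hsymm : ∀ v : Fin (2 * n + 1),
      (ℓ.trans (Equiv.swap P Q)).symm v = ℓ.symm (Equiv.swap P Q v) := by
    intro v
    simp [Equiv.symm_trans_apply, Equiv.symm_swap]
  by_cases hkn : k < n
  · by_cases hkj : k = j
    · subst hkj
      constructor
      · intro _
        exact ⟨hkn, hbad⟩
      · intro _
        refine ⟨hkn, ?_⟩
        rw [hsymm, hsymm, Equiv.swap_apply_left, Equiv.swap_apply_right]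
        intro h
        have := hℓ _ _ h
        rw [Equiv.apply_symm_apply, Equiv.apply_symm_apply, Fin.le_def, hPv, hQv] at this
        omega
    · have hv1 : ((posF n (2 * k)) : ℕ) = 2 * k := posF_val (by omega)
      have hv2 : ((posF n (2 * k + 1)) : ℕ) = 2 * k + 1 := posF_val (by omega)
      have e1 : Equiv.swap P Q (posF n (2 * k)) = posF n (2 * k) :=
        Equiv.swap_apply_of_ne_of_ne
          (fun he => by rw [Fin.ext_iff, hv1, hPv] at he; omega)
          (fun he => by rw [Fin.ext_iff, hv1, hQv] at he; omega)
      have e2 : Equiv.swap P Q (posF n (2 * k + 1)) = posF n (2 * k + 1) :=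
        Equiv.swap_apply_of_ne_of_ne
          (fun he => by rw [Fin.ext_iff, hv2, hPv] at he; omega)
          (fun he => by rw [Fin.ext_iff, hv2, hQv] at he; omega)
      unfold BadP
      rw [hsymm, hsymm, e1, e2]
  · constructor
    · rintro ⟨h, -⟩; omega
    · rintro ⟨h, -⟩; omega

lemma find_congr'' {p q : ℕ → Prop} [DecidablePred p] [DecidablePred q]
    (h : ∀ m, p m ↔ q m) (hp : ∃ m, p m) (hq : ∃ m, q m) :
    Nat.find hp = Nat.find hq :=
  le_antisymm (Nat.find_le ((h _).mpr (Nat.find_spec hq)))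
    (Nat.find_le ((h _).mp (Nat.find_spec hp)))

/-- A height ≤ 2 poset on an odd number of vertices with no isolated vertex and
more minimal than maximal elements has an even number of linear extensions. -/
theorem even_linExt_of_more_minimal {α : Type*} [Fintype α] [PartialOrder α] (n : ℕ)
    (hcard : Fintype.card α = 2 * n + 1)
    (hheight : ¬ ∃ x y z : α, x < y ∧ y < z)
    (hiso : ∀ x : α, ∃ y : α, y ≠ x ∧ (y < x ∨ x < y))
    (hmin : Nat.card {x : α // IsMin x} > Nat.card {x : α // IsMax x}) :
    Even (Nat.card {ℓ : α ≃ Fin (2 * n + 1) // IsLinearExtension ℓ}) := by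
  classical
  haveI : Finite (α ≃ Fin (2 * n + 1)) :=
    Finite.of_injective (fun e => (e : α → Fin (2 * n + 1)))
      (fun a b h => Equiv.coe_fn_injective h)
  set S := {ℓ : α ≃ Fin (2 * n + 1) // IsLinearExtension ℓ} with hS
  haveI : Fintype S := Fintype.ofFinite _
  rw [Nat.card_eq_fintype_card]
  have hex : ∀ s : S, ∃ k, BadP n s.1 k :=
    fun s => exists_bad n hcard hheight hiso hmin s.1 s.2
  let jf : S → ℕ := fun s => Nat.find (hex s)
  have hjspec : ∀ s, BadP n s.1 (jf s) := fun s => Nat.find_spec (hex s)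
  let g : S → S := fun s =>
    ⟨s.1.trans (Equiv.swap (posF n (2 * jf s)) (posF n (2 * jf s + 1))),
      swap_isLinExt s.1 s.2 (hjspec s).1 (hjspec s).2⟩
  have hj' : ∀ s, jf (g s) = jf s := fun s =>
    find_congr'' (badP_swap s.1 s.2 (hjspec s).1 (hjspec s).2) (hex (g s)) (hex s)
  apply even_card_of_fpf g
  · intro s
    have h := hj' s
    apply Subtype.ext
    show ((g s).1).trans
      (Equiv.swap (posF n (2 * jf (g s))) (posF n (2 * jf (g s) + 1))) = s.1
    rw [h]
    show (s.1.trans (Equiv.swap (posF n (2 * jf s)) (posF n (2 * jf s + 1)))).trans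
      (Equiv.swap (posF n (2 * jf s)) (posF n (2 * jf s + 1))) = s.1
    ext a
    simp [Equiv.trans_apply, Equiv.swap_apply_self]
  · intro s heq
    have hjn : jf s < n := (hjspec s).1
    have hPv : ((posF n (2 * jf s)) : ℕ) = 2 * jf s := posF_val (by omega)
    have hQv : ((posF n (2 * jf s + 1)) : ℕ) = 2 * jf s + 1 := posF_val (by omega)
    have h1 := congrArg (fun t : S => t.1 (s.1.symm (posF n (2 * jf s)))) heq
    simp only [g, Equiv.trans_apply, Equiv.apply_symm_apply, Equiv.swap_apply_left] at h1
    rw [Fin.ext_iff, hPv, hQv] at h1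
    omega
end

section
/- For every n ≥ 1, the Euler number E_n is not divisible by 3. -/
/-- An up-down alternating permutation of `{1, …, n}`:
`f 0 < f 1 > f 2 < f 3 > ⋯`.  These are counted by the Euler (zigzag) numbers,
and equivalently count linear extensions of the zigzag poset `Z_n`. -/
def IsAlternating {n : ℕ} (f : Equiv.Perm (Fin n)) : Prop :=
  ∀ i : ℕ, ∀ h : i + 1 < n,
    if i % 2 = 0 then f ⟨i, by omega⟩ < f ⟨i + 1, h⟩ else f ⟨i + 1, h⟩ < f ⟨i, by omega⟩

/-- The Euler (zigzag) number `E_n`, the number of alternating permutations of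
length `n`; exponential generating function `sec x + tan x`. -/
noncomputable def eulerNumber (n : ℕ) : ℕ :=
  Nat.card {f : Equiv.Perm (Fin n) // IsAlternating f}

namespace ThreeDvdAux

open Equiv

variable {m : ℕ}

/-- Delete the last position of a permutation of `Fin (m+2)` (whose value there is `K`),
relabelling the remaining values order-preservingly. -/
def Phi (K : Fin (m+2)) (f : Perm (Fin (m+2))) : Perm (Fin (m+1)) :=
  Equiv.removeNone ((finSuccEquiv' (Fin.last (m+1))).symm.trans (f.trans (finSuccEquiv' K)))

/-- Insert the value `K` at the last position. -/
def Psi (K : Fin (m+2)) (g : Perm (Fin (m+1))) : Perm (Fin (m+2)) :=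
  (finSuccEquiv' (Fin.last (m+1))).trans (g.optionCongr.trans (finSuccEquiv' K).symm)

lemma Psi_last (K : Fin (m+2)) (g : Perm (Fin (m+1))) : Psi K g (Fin.last (m+1)) = K := by
  simp [Psi, finSuccEquiv'_at, finSuccEquiv'_symm_none]

lemma Psi_castSucc (K : Fin (m+2)) (g : Perm (Fin (m+1))) (i : Fin (m+1)) :
    Psi K g i.castSucc = K.succAbove (g i) := by
  simp [Psi, finSuccEquiv'_last_apply_castSucc, finSuccEquiv'_symm_some]

lemma Phi_spec (K : Fin (m+2)) (f : Perm (Fin (m+2))) (hf : f (Fin.last (m+1)) = K)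
    (i : Fin (m+1)) : K.succAbove (Phi K f i) = f i.castSucc := by
  have hne : f i.castSucc ≠ K := by
    rw [← hf]
    intro h
    exact absurd (f.injective h) (Fin.castSucc_lt_last i).ne
  obtain ⟨j, hj⟩ := Fin.exists_succAbove_eq hne
  have h2 : ((finSuccEquiv' (Fin.last (m+1))).symm.trans (f.trans (finSuccEquiv' K)))
      (some i) = some j := by
    simp only [Equiv.trans_apply, finSuccEquiv'_symm_some, Fin.succAbove_last]
    rw [← hj, finSuccEquiv'_succAbove]
  have h3 := Equiv.removeNone_some _ ⟨j, h2⟩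
  rw [h2] at h3
  have h4 : Phi K f i = j := Option.some_injective _ h3
  rw [h4, hj]

lemma Psi_Phi (K : Fin (m+2)) (f : Perm (Fin (m+2))) (hf : f (Fin.last (m+1)) = K) :
    Psi K (Phi K f) = f := by
  apply Equiv.ext
  intro x
  induction x using Fin.lastCases with
  | last => rw [Psi_last, hf]
  | cast i => rw [Psi_castSucc, Phi_spec K f hf]

lemma Phi_Psi (K : Fin (m+2)) (g : Perm (Fin (m+1))) : Phi K (Psi K g) = g := by
  apply Equiv.ext
  intro i
  have h := Phi_spec K (Psi K g) (Psi_last K g) i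
  rw [Psi_castSucc] at h
  exact (Fin.strictMono_succAbove K).injective h

lemma alt_Psi_iff (K : Fin (m+2)) (g : Perm (Fin (m+1))) :
    IsAlternating (Psi K g) ↔ (IsAlternating g ∧
      (if m % 2 = 0 then (g (Fin.last m)).castSucc < K else K ≤ (g (Fin.last m)).castSucc)) := by
  have hc := Psi_castSucc K g
  have hl := Psi_last K g
  have ecast : ∀ (i : ℕ) (h : i < m+1), (⟨i, by omega⟩ : Fin (m+2)) = Fin.castSucc ⟨i, h⟩ :=
    fun _ _ => rfl
  have elast : (⟨m+1, by omega⟩ : Fin (m+2)) = Fin.last (m+1) := rfl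
  constructor
  · intro hA
    constructor
    · intro i h
      have h2 := hA i (by omega)
      rw [ecast i (by omega), ecast (i+1) h, hc ⟨i, by omega⟩, hc ⟨i+1, h⟩] at h2
      by_cases hp : i % 2 = 0 <;>
        simp only [hp, if_pos, if_neg, if_true, if_false] at h2 ⊢ <;>
      · rwa [Fin.succAbove_lt_succAbove_iff] at h2
    · have h2 := hA m (by omega)
      rw [ecast m (by omega), elast, hl, hc ⟨m, by omega⟩] at h2
      have : (⟨m, by omega⟩ : Fin (m+1)) = Fin.last m := rfl
      rw [this] at h2
      by_cases hp : m % 2 = 0 <;>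
        simp only [hp, if_pos, if_neg, if_true, if_false] at h2 ⊢
      · rwa [Fin.succAbove_lt_iff_castSucc_lt] at h2
      · rwa [Fin.lt_succAbove_iff_le_castSucc] at h2
  · rintro ⟨hg, hcond⟩
    intro i h
    rcases Nat.lt_or_ge (i+1) (m+1) with h1 | h1
    · have h2 := hg i h1
      rw [ecast i (by omega), ecast (i+1) h1, hc ⟨i, by omega⟩, hc ⟨i+1, h1⟩]
      by_cases hp : i % 2 = 0 <;>
        simp only [hp, if_pos, if_neg, if_true, if_false] at h2 ⊢ <;>
      · rwa [Fin.succAbove_lt_succAbove_iff]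
    · have hi : i = m := by omega
      have e1 : (⟨i, by omega⟩ : Fin (m+2)) = (Fin.last m).castSucc := Fin.ext (by simp [hi])
      have e2 : (⟨i+1, h⟩ : Fin (m+2)) = Fin.last (m+1) := Fin.ext (by simp [hi])
      have e3 : i % 2 = m % 2 := by omega
      rw [e1, e2, hl, hc (Fin.last m), e3]
      by_cases hp : m % 2 = 0 <;>
        simp only [hp, if_pos, if_neg, if_true, if_false] at hcond ⊢
      · rwa [Fin.succAbove_lt_iff_castSucc_lt]
      · rwa [Fin.lt_succAbove_iff_le_castSucc]

/-- Number of alternating permutations of `Fin (m+1)` with `p` holding of the last value. -/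
noncomputable def S (m : ℕ) (p : ℕ → Prop) : ℕ :=
  Nat.card {g : Perm (Fin (m+1)) // IsAlternating g ∧ p (g (Fin.last m) : ℕ)}

/-- The Entringer-style count: alternating permutations of `Fin (m+1)` with last value `k`. -/
noncomputable def B (m k : ℕ) : ℕ := S m (fun j => j = k)

lemma S_congr {p q : ℕ → Prop} (h : ∀ j, p j ↔ q j) : S m p = S m q :=
  Nat.card_congr (Equiv.subtypeEquivRight (fun g => by rw [h (g (Fin.last m) : ℕ)]))

lemma S_split (p q : ℕ → Prop) (hd : ∀ j, ¬ (p j ∧ q j)) :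
    S m (fun j => p j ∨ q j) = S m p + S m q := by
  classical
  unfold S
  rw [← Nat.card_sum]
  refine Nat.card_congr ?_
  refine (Equiv.subtypeEquivRight (fun g => ?_)).trans
    (subtypeOrEquiv (fun g : Perm (Fin (m+1)) => IsAlternating g ∧ p (g (Fin.last m) : ℕ))
      (fun g => IsAlternating g ∧ q (g (Fin.last m) : ℕ)) ?_)
  · tauto
  · rw [Pi.disjoint_iff]
    intro g
    rw [Prop.disjoint_iff]
    have := hd (g (Fin.last m) : ℕ)
    tauto

lemma S_zero {p : ℕ → Prop} (h : ∀ j, j ≤ m → ¬ p j) : S m p = 0 := by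
  have : IsEmpty {g : Perm (Fin (m+1)) // IsAlternating g ∧ p (g (Fin.last m) : ℕ)} :=
    ⟨fun g => h _ (by omega) g.2.2⟩
  exact Nat.card_of_isEmpty

lemma S_univ {p : ℕ → Prop} (h : ∀ j, j ≤ m → p j) : S m p = eulerNumber (m+1) :=
  Nat.card_congr (Equiv.subtypeEquivRight (fun g =>
    and_iff_left (h _ (by have := (g (Fin.last m)).isLt; omega))))

/-- Core recurrence: deleting the last entry gives a bijection. -/
theorem core (k : ℕ) (hk : k ≤ m + 1) :
    B (m+1) k = S m (fun j => if m % 2 = 0 then j < k else k ≤ j) := by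
  set K : Fin (m+2) := ⟨k, by omega⟩ with hK
  refine Nat.card_congr ?_
  refine
    { toFun := fun f => ⟨Phi K f.1, ?_⟩
      invFun := fun g => ⟨Psi K g.1, ?_⟩
      left_inv := fun f => Subtype.ext (Psi_Phi K f.1 (Fin.ext f.2.2))
      right_inv := fun g => Subtype.ext (Phi_Psi K g.1) }
  · obtain ⟨hA, hV⟩ := f.2
    have hfK : f.1 (Fin.last (m+1)) = K := Fin.ext hV
    have hPsi := Psi_Phi K f.1 hfK
    have h2 := (alt_Psi_iff K (Phi K f.1)).mp (by rwa [hPsi])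
    refine ⟨h2.1, ?_⟩
    have h3 := h2.2
    by_cases hp : m % 2 = 0 <;>
      simp only [hp, if_pos, if_neg, if_true, if_false] at h3 ⊢
    · simpa [Fin.lt_def] using h3
    · simpa [Fin.le_def] using h3
  · obtain ⟨hA, hV⟩ := g.2
    constructor
    · refine (alt_Psi_iff K g.1).mpr ⟨hA, ?_⟩
      by_cases hp : m % 2 = 0 <;>
        simp only [hp, if_pos, if_neg, if_true, if_false] at hV ⊢
      · simpa [Fin.lt_def] using hV
      · simpa [Fin.le_def] using hV
    · rw [Psi_last]

lemma asc_zero (hm : m % 2 = 0) : B (m+1) 0 = 0 := by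
  rw [core 0 (by omega)]
  exact S_zero (fun j _ => by simp [hm])

lemma desc_zero (hm : m % 2 = 1) : B (m+1) (m+1) = 0 := by
  rw [core (m+1) le_rfl]
  exact S_zero (fun j hj => by simp [hm]; omega)

lemma asc_step (hm : m % 2 = 0) (k : ℕ) (hk : k ≤ m) :
    B (m+1) (k+1) = B (m+1) k + B m k := by
  rw [core (k+1) (by omega), core k (by omega)]
  calc S m (fun j => if m % 2 = 0 then j < k + 1 else k + 1 ≤ j)
      = S m (fun j => j < k ∨ j = k) := S_congr (fun j => by simp [hm]; omega)
    _ = S m (fun j => j < k) + S m (fun j => j = k) := S_split _ _ (fun j => by omega)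
    _ = S m (fun j => if m % 2 = 0 then j < k else k ≤ j) + B m k := by
        have e : S m (fun j => if m % 2 = 0 then j < k else k ≤ j)
            = S m (fun j => j < k) := S_congr (fun j => by simp [hm])
        rw [e]
        rfl

lemma desc_step (hm : m % 2 = 1) (k : ℕ) (hk : k ≤ m) :
    B (m+1) k = B (m+1) (k+1) + B m k := by
  rw [core k (by omega), core (k+1) (by omega)]
  calc S m (fun j => if m % 2 = 0 then j < k else k ≤ j)
      = S m (fun j => k + 1 ≤ j ∨ j = k) := S_congr (fun j => by simp [hm]; omega)
    _ = S m (fun j => k + 1 ≤ j) + S m (fun j => j = k) := S_split _ _ (fun j => by omega)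
    _ = S m (fun j => if m % 2 = 0 then j < k + 1 else k + 1 ≤ j) + B m k := by
        have e : S m (fun j => if m % 2 = 0 then j < k + 1 else k + 1 ≤ j)
            = S m (fun j => k + 1 ≤ j) := S_congr (fun j => by simp [hm])
        rw [e]
        rfl

lemma euler_even (hm : m % 2 = 0) : eulerNumber (m+1) = B (m+1) (m+1) := by
  rw [core (m+1) le_rfl]
  exact (S_univ (fun j hj => by simp [hm]; omega)).symm

lemma euler_odd (hm : m % 2 = 1) : eulerNumber (m+1) = B (m+1) 0 := by
  rw [core 0 (by omega)]
  exact (S_univ (fun j hj => by simp [hm])).symm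

lemma euler_one : eulerNumber 1 = 1 := by
  have h : ∀ f : Perm (Fin 1), IsAlternating f := fun f i hi => absurd hi (by omega)
  rw [eulerNumber, Nat.card_congr (Equiv.subtypeUnivEquiv h), Nat.card_eq_fintype_card]
  simp

/-- Closed form for the Entringer numbers mod 3. -/
def g3 (m k : ℕ) : ℕ :=
  if k = m then (if m % 2 = 0 then 0 else if m % 4 = 1 then 1 else 2)
  else if k = 0 then (if m % 4 = 0 then 2 else if m % 4 = 2 then 1 else 0)
  else if (k + (m+2)/2) % 2 = 1 then 1 else 2

set_option maxHeartbeats 1600000 in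
lemma a1 (hm1 : 1 ≤ m) (hm : m % 2 = 0) {k : ℕ} (hk : k ≤ m) :
    g3 (m+1) (k+1) % 3 = (g3 (m+1) k + g3 m k) % 3 := by
  unfold g3
  split_ifs <;> first | omega | tauto

set_option maxHeartbeats 1600000 in
lemma a2 (hm1 : 1 ≤ m) (hm : m % 2 = 1) {k : ℕ} (hk : k ≤ m) :
    g3 (m+1) k % 3 = (g3 (m+1) (k+1) + g3 m k) % 3 := by
  unfold g3
  split_ifs <;> first | omega | tauto

lemma a3 (hm : m % 2 = 0) : g3 (m+1) 0 % 3 = 0 := by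
  unfold g3
  split_ifs <;> first | omega | tauto

lemma a4 (hm : m % 2 = 1) : g3 (m+1) (m+1) % 3 = 0 := by
  unfold g3
  split_ifs <;> first | omega | tauto

lemma a5 (hm : m % 2 = 0) : g3 (m+1) (m+1) % 3 ≠ 0 := by
  unfold g3
  split_ifs <;> first | omega | tauto

lemma a6 (hm : m % 2 = 1) : g3 (m+1) 0 % 3 ≠ 0 := by
  unfold g3
  split_ifs <;> first | omega | tauto

lemma row : ∀ m, 1 ≤ m → ∀ k, k ≤ m → B m k % 3 = g3 m k % 3 := by
  intro m
  induction m with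
  | zero => intro h; exact absurd h (by omega)
  | succ m ih =>
    intro _ k hk
    by_cases hm0 : m = 0
    · subst hm0
      interval_cases k
      · have h := asc_zero (m := 0) rfl
        have hg : g3 (0+1) 0 = 0 := by decide
        omega
      · have h1 : B (0+1) 1 = eulerNumber (0+1) := by
          rw [core 1 le_rfl]
          exact S_univ (m := 0) (p := fun j => if 0 % 2 = 0 then j < 1 else 1 ≤ j)
            (fun j hj => by norm_num; omega)
        have h2 : eulerNumber (0+1) = 1 := euler_one
        have hg : g3 (0+1) 1 = 1 := by decide
        omega
    · have hm : 1 ≤ m := by omega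
      have IH := ih hm
      by_cases hp : m % 2 = 0
      · have key : ∀ k, k ≤ m + 1 → B (m+1) k % 3 = g3 (m+1) k % 3 := by
          intro k
          induction k with
          | zero =>
            intro _
            have h1 := asc_zero hp
            have h2 := a3 hp
            omega
          | succ k ihk =>
            intro hk1
            have h1 := asc_step hp k (by omega)
            have h2 := ihk (by omega)
            have h3 := IH k (by omega)
            have h4 := a1 hm hp (k := k) (by omega)
            omega
        exact key k hk
      · have hp1 : m % 2 = 1 := by omega
        have key : ∀ d k, k + d = m + 1 → B (m+1) k % 3 = g3 (m+1) k % 3 := by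
          intro d
          induction d with
          | zero =>
            intro k hk0
            have hkm : k = m + 1 := by omega
            subst hkm
            have h1 := desc_zero hp1
            have h2 := a4 hp1
            omega
          | succ d ihd =>
            intro k hk0
            have h1 := desc_step hp1 k (by omega)
            have h2 := ihd (k+1) (by omega)
            have h3 := IH k (by omega)
            have h4 := a2 hm hp1 (k := k) (by omega)
            omega
        exact key (m + 1 - k) k (by omega)

end ThreeDvdAux

/-- For every `n ≥ 1`, the Euler number `E_n` is not divisible by 3. -/
theorem three_not_dvd_eulerNumber (n : ℕ) (hn : 1 ≤ n) : ¬ (3 ∣ eulerNumber n) := by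
  open ThreeDvdAux in
  obtain ⟨m, rfl⟩ : ∃ m, n = m + 1 := ⟨n - 1, by omega⟩
  by_cases hm0 : m = 0
  · subst hm0
    have h := euler_one
    intro hdvd
    have : eulerNumber (0+1) = eulerNumber 1 := rfl
    omega
  · have hm : 1 ≤ m := by omega
    by_cases hp : m % 2 = 0
    · have h1 := euler_even hp
      have h2 := row (m+1) (by omega) (m+1) le_rfl
      have h3 := a5 hp
      intro hdvd
      rw [h1] at hdvd
      omega
    · have hp1 : m % 2 = 1 := by omega
      have h1 := euler_odd hp1
      have h2 := row (m+1) (by omega) 0 (by omega)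
      have h3 := a6 hp1
      intro hdvd
      rw [h1] at hdvd
      omega
end

section
/- For every finite set Q of primes, there are infinitely many positive integers n such that q ∤ E_n for all q ∈ Q. -/
namespace EulerAux

lemma isAlt_up {n : ℕ} {f : Equiv.Perm (Fin n)} (hf : IsAlternating f) {i : ℕ} (h : i+1 < n)
    (hi : i % 2 = 0) : ((f ⟨i, by omega⟩ : Fin n) : ℕ) < ((f ⟨i+1, h⟩ : Fin n) : ℕ) := by
  have := hf i h
  rw [if_pos hi] at this
  exact this

lemma isAlt_down {n : ℕ} {f : Equiv.Perm (Fin n)} (hf : IsAlternating f) {i : ℕ} (h : i+1 < n)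
    (hi : i % 2 = 1) : ((f ⟨i+1, h⟩ : Fin n) : ℕ) < ((f ⟨i, by omega⟩ : Fin n) : ℕ) := by
  have := hf i h
  rw [if_neg (by omega)] at this
  exact this

/-- number of alternating permutations of `Fin (n+1)` with first value `k` -/
noncomputable def Acard (n k : ℕ) : ℕ :=
  Nat.card {f : Equiv.Perm (Fin (n+1)) // IsAlternating f ∧ ((f 0 : Fin (n+1)) : ℕ) = k}

lemma card_partition (n : ℕ) (P : Equiv.Perm (Fin (n+1)) → Prop) :
    Nat.card {f : Equiv.Perm (Fin (n+1)) // P f}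
      = ∑ k ∈ Finset.range (n+1), Nat.card {f : Equiv.Perm (Fin (n+1)) // P f ∧ ((f 0 : Fin (n+1)) : ℕ) = k} := by
  classical
  have e : {f : Equiv.Perm (Fin (n+1)) // P f}
      ≃ Σ k : Fin (n+1), {f : Equiv.Perm (Fin (n+1)) // P f ∧ f 0 = k} :=
    { toFun := fun x => ⟨x.1 0, x.1, x.2, rfl⟩
      invFun := fun y => ⟨y.2.1, y.2.2.1⟩
      left_inv := fun x => rfl
      right_inv := fun y => by
        obtain ⟨kk, f, hf, h0⟩ := y
        subst h0
        rfl }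
  rw [Nat.card_congr e, Nat.card_eq_fintype_card, Fintype.card_sigma]
  rw [← Fin.sum_univ_eq_sum_range
    (fun k => Nat.card {f : Equiv.Perm (Fin (n+1)) // P f ∧ ((f 0 : Fin (n+1)) : ℕ) = k}) (n+1)]
  apply Finset.sum_congr rfl
  intro kk _
  rw [← Nat.card_eq_fintype_card]
  apply Nat.card_congr
  apply Equiv.subtypeEquivRight
  intro f
  simp [Fin.ext_iff]

lemma euler_partition (n : ℕ) :
    eulerNumber (n+1) = ∑ k ∈ Finset.range (n+1), Acard n k :=
  card_partition n IsAlternating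

lemma sum_trunc' {M : Type*} [AddCommMonoid M] (f : ℕ → M) (a b : ℕ) :
    ∑ m ∈ Finset.range b, (if m < a then f m else 0) = ∑ m ∈ Finset.range (min a b), f m := by
  rw [← Finset.sum_filter]
  congr 1
  ext x
  simp only [Finset.mem_filter, Finset.mem_range]
  omega

lemma card_partition_lt (n M : ℕ) (hM : M ≤ n+1) :
    Nat.card {g : Equiv.Perm (Fin (n+1)) // IsAlternating g ∧ ((g 0 : Fin (n+1)) : ℕ) < M}
      = ∑ k ∈ Finset.range M, Acard n k := by
  rw [card_partition n (fun g => IsAlternating g ∧ ((g 0 : Fin (n+1)) : ℕ) < M)]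
  have e : ∀ k ∈ Finset.range (n+1),
      Nat.card {f : Equiv.Perm (Fin (n+1)) //
          (IsAlternating f ∧ ((f 0 : Fin (n+1)) : ℕ) < M) ∧ ((f 0 : Fin (n+1)) : ℕ) = k}
      = if k < M then Acard n k else 0 := by
    intro k _
    by_cases hk : k < M
    · rw [if_pos hk, Acard]
      apply Nat.card_congr
      apply Equiv.subtypeEquivRight
      intro f
      constructor
      · rintro ⟨⟨h1, _⟩, h3⟩; exact ⟨h1, h3⟩
      · rintro ⟨h1, h2⟩; exact ⟨⟨h1, by omega⟩, h2⟩
    · rw [if_neg hk]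
      have : IsEmpty {f : Equiv.Perm (Fin (n+1)) //
          (IsAlternating f ∧ ((f 0 : Fin (n+1)) : ℕ) < M) ∧ ((f 0 : Fin (n+1)) : ℕ) = k} := by
        constructor
        rintro ⟨f, ⟨_, h2⟩, h3⟩
        omega
      exact Nat.card_of_isEmpty
  rw [Finset.sum_congr rfl e, sum_trunc', min_eq_left hM]

lemma Acard_zero_of_ge {n k : ℕ} (h : n + 1 ≤ k) : Acard n k = 0 := by
  have : IsEmpty {f : Equiv.Perm (Fin (n+1)) // IsAlternating f ∧ ((f 0 : Fin (n+1)) : ℕ) = k} := by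
    constructor
    rintro ⟨f, _, h0⟩
    have := (f 0).isLt
    omega
  exact Nat.card_of_isEmpty

lemma Acard_top {n : ℕ} (h : 1 ≤ n) : Acard n n = 0 := by
  have : IsEmpty {f : Equiv.Perm (Fin (n+1)) // IsAlternating f ∧ ((f 0 : Fin (n+1)) : ℕ) = n} := by
    constructor
    rintro ⟨f, hf, h0⟩
    have h1 := isAlt_up hf (show 0 + 1 < n + 1 by omega) (by norm_num)
    have h2 := (f ⟨0+1, by omega⟩).isLt
    have e0 : (0 : Fin (n+1)) = ⟨0, by omega⟩ := by
      apply Fin.ext; simp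
    rw [e0] at h0
    omega
  exact Nat.card_of_isEmpty

lemma Acard_zero_row (k : ℕ) : Acard 0 k = if k = 0 then 1 else 0 := by
  by_cases hk : k = 0
  · subst hk
    rw [if_pos rfl, Acard]
    have h1 : ∀ f : Equiv.Perm (Fin 1), IsAlternating f ∧ ((f 0 : Fin 1) : ℕ) = 0 := by
      intro f
      constructor
      · intro i h; omega
      · have := (f 0).isLt; omega
    have : Nonempty {f : Equiv.Perm (Fin 1) // IsAlternating f ∧ ((f 0 : Fin 1) : ℕ) = 0} :=
      ⟨⟨1, h1 1⟩⟩
    have : Subsingleton {f : Equiv.Perm (Fin 1) // IsAlternating f ∧ ((f 0 : Fin 1) : ℕ) = 0} := by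
      constructor
      rintro ⟨f, _⟩ ⟨g, _⟩
      apply Subtype.ext
      apply Equiv.ext
      intro x
      apply Fin.ext
      have := (f x).isLt
      have := (g x).isLt
      omega
    exact Nat.card_unique
  · rw [if_neg hk]
    exact Acard_zero_of_ge (by omega)

end EulerAux

namespace EulerAux

/-- delete value `k` and close the gap -/
def dn (k x : ℕ) : ℕ := if x < k then x else x - 1
/-- insert a gap at value `k` -/
def ln (k y : ℕ) : ℕ := if y < k then y else y + 1

def fwdFun (n k : ℕ) (f : Equiv.Perm (Fin (n+2))) : Fin (n+1) → Fin (n+1) :=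
  fun i => ⟨n - dn k ((f i.succ : Fin (n+2)) : ℕ), by omega⟩

def bwdFun (n k : ℕ) (hk : k ≤ n) (g : Equiv.Perm (Fin (n+1))) : Fin (n+2) → Fin (n+2) :=
  fun x =>
    if hx : (x : ℕ) = 0 then ⟨k, by omega⟩
    else
      ⟨ln k (n - ((g ⟨(x : ℕ) - 1, by have := x.isLt; omega⟩ : Fin (n+1)) : ℕ)), by
        have h1 : n - ((g ⟨(x : ℕ) - 1, by have := x.isLt; omega⟩ : Fin (n+1)) : ℕ) ≤ n :=
          Nat.sub_le _ _
        unfold ln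
        split <;> omega⟩

lemma f_succ_ne_k {n k : ℕ} (f : Equiv.Perm (Fin (n+2))) (hf0 : ((f 0 : Fin (n+2)) : ℕ) = k)
    (i : Fin (n+1)) : ((f i.succ : Fin (n+2)) : ℕ) ≠ k := by
  intro h
  have he : f i.succ = f 0 := by
    apply Fin.ext
    rw [h, hf0]
  have := f.injective he
  exact Fin.succ_ne_zero i this

lemma fwdFun_inj {n k : ℕ} (hk : k ≤ n) (f : Equiv.Perm (Fin (n+2)))
    (hf0 : ((f 0 : Fin (n+2)) : ℕ) = k) : Function.Injective (fwdFun n k f) := by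
  intro a b hab
  have ha := f_succ_ne_k f hf0 a
  have hb := f_succ_ne_k f hf0 b
  have ha' := (f a.succ).isLt
  have hb' := (f b.succ).isLt
  rw [fwdFun, fwdFun, Fin.mk.injEq] at hab
  have hval : ((f a.succ : Fin (n+2)) : ℕ) = ((f b.succ : Fin (n+2)) : ℕ) := by
    unfold dn at hab
    split_ifs at hab <;> omega
  have := f.injective (Fin.ext hval)
  exact Fin.succ_injective _ this

lemma bwdFun_inj {n k : ℕ} (hk : k ≤ n) (g : Equiv.Perm (Fin (n+1))) :
    Function.Injective (bwdFun n k hk g) := by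
  intro a b hab
  unfold bwdFun at hab
  by_cases haz : (a : ℕ) = 0 <;> by_cases hbz : (b : ℕ) = 0
  · apply Fin.ext; omega
  · rw [dif_pos haz, dif_neg hbz, Fin.mk.injEq] at hab
    exfalso
    have := Nat.sub_le n ((g ⟨(b : ℕ) - 1, by have := b.isLt; omega⟩ : Fin (n+1)) : ℕ)
    unfold ln at hab
    split_ifs at hab <;> omega
  · rw [dif_neg haz, dif_pos hbz, Fin.mk.injEq] at hab
    exfalso
    have := Nat.sub_le n ((g ⟨(a : ℕ) - 1, by have := a.isLt; omega⟩ : Fin (n+1)) : ℕ)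
    unfold ln at hab
    split_ifs at hab <;> omega
  · rw [dif_neg haz, dif_neg hbz, Fin.mk.injEq] at hab
    have hga := (g ⟨(a : ℕ) - 1, by have := a.isLt; omega⟩).isLt
    have hgb := (g ⟨(b : ℕ) - 1, by have := b.isLt; omega⟩).isLt
    have hval : ((g ⟨(a : ℕ) - 1, by have := a.isLt; omega⟩ : Fin (n+1)) : ℕ)
        = ((g ⟨(b : ℕ) - 1, by have := b.isLt; omega⟩ : Fin (n+1)) : ℕ) := by
      unfold ln at hab
      split_ifs at hab <;> omega
    have := g.injective (Fin.ext hval)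
    rw [Fin.mk.injEq] at this
    apply Fin.ext
    omega

noncomputable def fwdPerm (n k : ℕ) (hk : k ≤ n) (f : Equiv.Perm (Fin (n+2)))
    (hf0 : ((f 0 : Fin (n+2)) : ℕ) = k) : Equiv.Perm (Fin (n+1)) :=
  Equiv.ofBijective (fwdFun n k f) (Finite.injective_iff_bijective.mp (fwdFun_inj hk f hf0))

noncomputable def bwdPerm (n k : ℕ) (hk : k ≤ n) (g : Equiv.Perm (Fin (n+1))) : Equiv.Perm (Fin (n+2)) :=
  Equiv.ofBijective (bwdFun n k hk g) (Finite.injective_iff_bijective.mp (bwdFun_inj hk g))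

lemma fwdPerm_apply (n k : ℕ) (hk : k ≤ n) (f : Equiv.Perm (Fin (n+2)))
    (hf0 : ((f 0 : Fin (n+2)) : ℕ) = k) (i : Fin (n+1)) :
    fwdPerm n k hk f hf0 i = fwdFun n k f i := rfl

lemma bwdPerm_apply (n k : ℕ) (hk : k ≤ n) (g : Equiv.Perm (Fin (n+1))) (x : Fin (n+2)) :
    bwdPerm n k hk g x = bwdFun n k hk g x := rfl

end EulerAux

namespace EulerAux

lemma isAlt_up' {N : ℕ} {f : Equiv.Perm (Fin N)} (hf : IsAlternating f) (i j : Fin N)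
    (hi : (i : ℕ) % 2 = 0) (hij : (j : ℕ) = (i : ℕ) + 1) : ((f i : Fin N) : ℕ) < ((f j : Fin N) : ℕ) := by
  have h : (i : ℕ) + 1 < N := by have := j.isLt; omega
  have hthis := hf (i : ℕ) h
  rw [if_pos hi] at hthis
  have e1 : (⟨(i : ℕ), by omega⟩ : Fin N) = i := by apply Fin.ext; rfl
  have e2 : (⟨(i : ℕ) + 1, h⟩ : Fin N) = j := by apply Fin.ext; simp [hij]
  rw [e1, e2] at hthis
  exact hthis

lemma isAlt_down' {N : ℕ} {f : Equiv.Perm (Fin N)} (hf : IsAlternating f) (i j : Fin N)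
    (hi : (i : ℕ) % 2 = 1) (hij : (j : ℕ) = (i : ℕ) + 1) : ((f j : Fin N) : ℕ) < ((f i : Fin N) : ℕ) := by
  have h : (i : ℕ) + 1 < N := by have := j.isLt; omega
  have hthis := hf (i : ℕ) h
  rw [if_neg (by omega)] at hthis
  have e1 : (⟨(i : ℕ), by omega⟩ : Fin N) = i := by apply Fin.ext; rfl
  have e2 : (⟨(i : ℕ) + 1, h⟩ : Fin N) = j := by apply Fin.ext; simp [hij]
  rw [e1, e2] at hthis
  exact hthis

lemma isAlt_of {N : ℕ} (f : Equiv.Perm (Fin N))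
    (H : ∀ i j : Fin N, (j : ℕ) = (i : ℕ) + 1 →
      ((i : ℕ) % 2 = 0 → ((f i : Fin N) : ℕ) < ((f j : Fin N) : ℕ))
      ∧ ((i : ℕ) % 2 = 1 → ((f j : Fin N) : ℕ) < ((f i : Fin N) : ℕ))) :
    IsAlternating f := by
  intro i h
  have key := H ⟨i, by omega⟩ ⟨i+1, h⟩ rfl
  by_cases hi : i % 2 = 0
  · rw [if_pos hi]
    exact key.1 hi
  · rw [if_neg hi]
    have h1 : i % 2 = 1 := by omega
    exact key.2 h1

lemma fwd_alt {n k : ℕ} (hk : k ≤ n) (f : Equiv.Perm (Fin (n+2))) (hf : IsAlternating f)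
    (hf0 : ((f 0 : Fin (n+2)) : ℕ) = k) : IsAlternating (fwdPerm n k hk f hf0) := by
  apply isAlt_of
  intro i j hij
  have hA := f_succ_ne_k f hf0 i
  have hB := f_succ_ne_k f hf0 j
  have hAlt := (f i.succ).isLt
  have hBlt := (f j.succ).isLt
  have hsucc : ((j.succ : Fin (n+2)) : ℕ) = ((i.succ : Fin (n+2)) : ℕ) + 1 := by
    simp [Fin.val_succ, hij]
  constructor
  · intro hi
    have hcmp := isAlt_down' hf i.succ j.succ (by simp [Fin.val_succ]; omega) hsucc
    show n - dn k _ < n - dn k _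
    unfold dn
    split_ifs <;> omega
  · intro hi
    have hcmp := isAlt_up' hf i.succ j.succ (by simp [Fin.val_succ]; omega) hsucc
    show n - dn k _ < n - dn k _
    unfold dn
    split_ifs <;> omega

lemma fwd_lt {n k : ℕ} (hk : k ≤ n) (f : Equiv.Perm (Fin (n+2))) (hf : IsAlternating f)
    (hf0 : ((f 0 : Fin (n+2)) : ℕ) = k) :
    ((fwdPerm n k hk f hf0 0 : Fin (n+1)) : ℕ) < n + 1 - k := by
  have h1 : ((f 0 : Fin (n+2)) : ℕ) < ((f (0 : Fin (n+1)).succ : Fin (n+2)) : ℕ) := by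
    apply isAlt_up' hf 0 (0 : Fin (n+1)).succ (by simp) (by simp [Fin.val_succ])
  rw [hf0] at h1
  have h2 := (f (0 : Fin (n+1)).succ).isLt
  show ((fwdFun n k f 0 : Fin (n+1)) : ℕ) < n + 1 - k
  show n - dn k _ < n + 1 - k
  unfold dn
  split_ifs <;> omega

lemma bwd_first {n k : ℕ} (hk : k ≤ n) (g : Equiv.Perm (Fin (n+1))) :
    ((bwdPerm n k hk g 0 : Fin (n+2)) : ℕ) = k := by
  show ((bwdFun n k hk g 0 : Fin (n+2)) : ℕ) = k
  unfold bwdFun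
  rw [dif_pos (by simp)]

lemma bwd_alt {n k : ℕ} (hk : k ≤ n) (g : Equiv.Perm (Fin (n+1))) (hg : IsAlternating g)
    (hg0 : ((g 0 : Fin (n+1)) : ℕ) < n + 1 - k) : IsAlternating (bwdPerm n k hk g) := by
  apply isAlt_of
  intro i j hij
  have hjnz : (j : ℕ) ≠ 0 := by omega
  by_cases hiz : (i : ℕ) = 0
  · -- first comparison
    have e0 : (⟨(j : ℕ) - 1, by have := j.isLt; omega⟩ : Fin (n+1)) = 0 := by
      apply Fin.ext; simp; omega
    have hgl := (g 0).isLt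
    constructor
    · intro _
      show ((bwdFun n k hk g i : Fin (n+2)) : ℕ) < ((bwdFun n k hk g j : Fin (n+2)) : ℕ)
      unfold bwdFun
      rw [dif_pos hiz, dif_neg hjnz]
      simp only [e0]
      show k < ln k _
      unfold ln
      split_ifs <;> omega
    · intro hi
      omega
  · -- later comparisons
    have hii := i.isLt
    have e1 : ((⟨(j : ℕ) - 1, by have := j.isLt; omega⟩ : Fin (n+1)) : ℕ)
        = ((⟨(i : ℕ) - 1, by omega⟩ : Fin (n+1)) : ℕ) + 1 := by simp; omega
    have hga := (g ⟨(i : ℕ) - 1, by omega⟩).isLt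
    have hgb := (g ⟨(j : ℕ) - 1, by have := j.isLt; omega⟩).isLt
    constructor
    · intro hi
      have hcmp := isAlt_down' hg ⟨(i : ℕ) - 1, by omega⟩ ⟨(j : ℕ) - 1, by have := j.isLt; omega⟩
        (by simp; omega) e1
      show ((bwdFun n k hk g i : Fin (n+2)) : ℕ) < ((bwdFun n k hk g j : Fin (n+2)) : ℕ)
      unfold bwdFun
      rw [dif_neg hiz, dif_neg hjnz]
      show ln k _ < ln k _
      unfold ln
      split_ifs <;> omega
    · intro hi
      have hcmp := isAlt_up' hg ⟨(i : ℕ) - 1, by omega⟩ ⟨(j : ℕ) - 1, by have := j.isLt; omega⟩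
        (by simp; omega) e1
      show ((bwdFun n k hk g j : Fin (n+2)) : ℕ) < ((bwdFun n k hk g i : Fin (n+2)) : ℕ)
      unfold bwdFun
      rw [dif_neg hjnz, dif_neg hiz]
      show ln k _ < ln k _
      unfold ln
      split_ifs <;> omega

end EulerAux

namespace EulerAux

lemma left_inv {n k : ℕ} (hk : k ≤ n) (f : Equiv.Perm (Fin (n+2))) (hf : IsAlternating f)
    (hf0 : ((f 0 : Fin (n+2)) : ℕ) = k) :
    bwdPerm n k hk (fwdPerm n k hk f hf0) = f := by
  apply Equiv.ext
  intro x
  apply Fin.ext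
  show ((bwdFun n k hk (fwdPerm n k hk f hf0) x : Fin (n+2)) : ℕ) = ((f x : Fin (n+2)) : ℕ)
  unfold bwdFun
  by_cases hx : (x : ℕ) = 0
  · rw [dif_pos hx]
    have hx0 : x = 0 := by apply Fin.ext; simpa using hx
    rw [hx0, hf0]
  · rw [dif_neg hx]
    have hsucc : (⟨(x : ℕ) - 1, by have := x.isLt; omega⟩ : Fin (n+1)).succ = x := by
      apply Fin.ext; simp [Fin.val_succ]; omega
    have happ : ((fwdPerm n k hk f hf0 (⟨(x : ℕ) - 1, by have := x.isLt; omega⟩ : Fin (n+1)) : Fin (n+1)) : ℕ)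
        = n - dn k ((f x : Fin (n+2)) : ℕ) := by
      show ((fwdFun n k f _ : Fin (n+1)) : ℕ) = _
      unfold fwdFun
      simp only [hsucc]
    simp only [happ]
    have hAne : ((f x : Fin (n+2)) : ℕ) ≠ k := by
      have := f_succ_ne_k f hf0 (⟨(x : ℕ) - 1, by have := x.isLt; omega⟩ : Fin (n+1))
      rwa [hsucc] at this
    have hAlt := (f x).isLt
    show ln k (n - (n - dn k _)) = _
    unfold ln dn
    split_ifs <;> omega

lemma right_inv {n k : ℕ} (hk : k ≤ n) (g : Equiv.Perm (Fin (n+1)))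
    (h0 : ((bwdPerm n k hk g 0 : Fin (n+2)) : ℕ) = k) :
    fwdPerm n k hk (bwdPerm n k hk g) h0 = g := by
  apply Equiv.ext
  intro i
  apply Fin.ext
  show ((fwdFun n k (bwdPerm n k hk g) i : Fin (n+1)) : ℕ) = ((g i : Fin (n+1)) : ℕ)
  have hsuccnz : ((i.succ : Fin (n+2)) : ℕ) ≠ 0 := by simp [Fin.val_succ]
  have hprev : (⟨((i.succ : Fin (n+2)) : ℕ) - 1, by have := i.succ.isLt; omega⟩ : Fin (n+1)) = i := by
    apply Fin.ext; simp [Fin.val_succ]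
  have happ : ((bwdPerm n k hk g i.succ : Fin (n+2)) : ℕ)
      = ln k (n - ((g i : Fin (n+1)) : ℕ)) := by
    show ((bwdFun n k hk g i.succ : Fin (n+2)) : ℕ) = _
    unfold bwdFun
    rw [dif_neg hsuccnz]
    simp only [hprev]
  show n - dn k _ = _
  rw [happ]
  have hgi := (g i).isLt
  unfold ln dn
  split_ifs <;> omega

lemma Acard_rec (n k : ℕ) (hk : k ≤ n) :
    Acard (n+1) k = ∑ j ∈ Finset.range (n+1-k), Acard n j := by
  rw [← card_partition_lt n (n+1-k) (by omega)]
  apply Nat.card_congr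
  exact
    { toFun := fun x => ⟨fwdPerm n k hk x.1 x.2.2, fwd_alt hk x.1 x.2.1 x.2.2, fwd_lt hk x.1 x.2.1 x.2.2⟩
      invFun := fun y => ⟨bwdPerm n k hk y.1, bwd_alt hk y.1 y.2.1 y.2.2, bwd_first hk y.1⟩
      left_inv := fun x => Subtype.ext (left_inv hk x.1 x.2.1 x.2.2)
      right_inv := fun y => Subtype.ext (right_inv hk y.1 (bwd_first hk y.1)) }

end EulerAux


namespace EulerAux

/-- The Entringer-style triangle, 0-indexed. -/
def u : ℕ → ℕ → ℕ
  | 0, k => if k = 0 then 1 else 0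
  | (n+1), k => ∑ j ∈ Finset.range (n + 1 - k), u n j

lemma u_succ (n k : ℕ) : u (n+1) k = ∑ j ∈ Finset.range (n + 1 - k), u n j := rfl

lemma u_of_le {n k : ℕ} (h1 : 1 ≤ n) (h : n ≤ k) : u n k = 0 := by
  obtain ⟨m, rfl⟩ : ∃ m, n = m + 1 := ⟨n - 1, by omega⟩
  rw [u_succ]
  have : m + 1 - k = 0 := by omega
  simp [this]

lemma u_01 {n : ℕ} (h : 2 ≤ n) : u n 0 = u n 1 := by
  obtain ⟨m, rfl⟩ : ∃ m, n = m + 1 := ⟨n - 1, by omega⟩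
  rw [u_succ, u_succ]
  have h1 : m + 1 - 0 = m + 1 := by omega
  have h2 : m + 1 - 1 = m := by omega
  rw [h1, h2, Finset.sum_range_succ, u_of_le (by omega) le_rfl, add_zero]

lemma u_one_zero : u 1 0 = 1 := by simp [u_succ, u]

lemma u_two_zero : u 2 0 = 1 := by
  rw [u_succ]
  simp [Finset.sum_range_succ, u_one_zero, u_of_le]

/-- hockey stick -/
lemma hockey (s r : ℕ) : ∑ m ∈ Finset.range s, (m + r).choose r = (s + r).choose (r + 1) := by
  induction s with
  | zero => simp [Nat.choose_eq_zero_of_lt]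
  | succ s ih =>
      rw [Finset.sum_range_succ, ih]
      have : s + 1 + r = (s + r) + 1 := by omega
      rw [this, Nat.choose_succ_succ' (s + r) r, add_comm]

section helpers

variable {M : Type*} [AddCommMonoid M]

lemma sum_trunc (f : ℕ → M) (a b : ℕ) :
    ∑ m ∈ Finset.range b, (if m < a then f m else 0) = ∑ m ∈ Finset.range (min a b), f m := by
  rw [← Finset.sum_filter]
  congr 1
  ext x
  simp only [Finset.mem_filter, Finset.mem_range, Finset.mem_range]
  omega

lemma sum_ext (f : ℕ → M) {a b : ℕ} (h : a ≤ b) :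
    ∑ m ∈ Finset.range a, f m = ∑ m ∈ Finset.range b, (if m < a then f m else 0) := by
  rw [sum_trunc, min_eq_left h]

end helpers

lemma sum_tail {M : Type*} [AddCommGroup M] (f : ℕ → M) (i b : ℕ) :
    ∑ t ∈ Finset.range b, (if i < t then f t else 0)
      = ∑ t ∈ Finset.range b, f t - ∑ t ∈ Finset.range (min (i+1) b), f t := by
  rw [eq_sub_iff_add_eq, ← sum_trunc f (i+1) b, ← Finset.sum_add_distrib]
  apply Finset.sum_congr rfl
  intro x _
  by_cases hx : i < x
  · simp [hx, show ¬ (x < i + 1) by omega]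
  · simp [hx, show x < i + 1 by omega]

section modp

variable (p : ℕ) [hp : Fact p.Prime]

/-- the triangle in `ZMod p` -/
def v (n k : ℕ) : ZMod p := (u n k : ZMod p)

lemma v_succ (n k : ℕ) : v p (n+1) k = ∑ j ∈ Finset.range (n + 1 - k), v p n j := by
  rw [v, u_succ, Nat.cast_sum]; rfl

/-- the weighted edge sums -/
def X (r n : ℕ) : ZMod p :=
  ∑ m ∈ Finset.range (p - r), ((m + r).choose r : ZMod p) * v p n m

lemma choose_p_cast {t : ℕ} (h1 : 1 ≤ t) (h2 : t ≤ p - 1) : ((p.choose t : ℕ) : ZMod p) = 0 := by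
  rw [ZMod.natCast_eq_zero_iff]
  exact Nat.Prime.dvd_choose_self hp.out (by omega) (by have := hp.out.two_le; omega)

end modp
end EulerAux
namespace EulerAux
section modp
variable (p : ℕ) [hp : Fact p.Prime]

lemma hockey' (s r : ℕ) :
    ∑ m ∈ Finset.range s, ((m + r).choose r : ZMod p) = ((s + r).choose (r + 1) : ZMod p) := by
  rw [← Nat.cast_sum, hockey]

lemma step {r n : ℕ} (hr : r + 2 ≤ p - 1) (hn2 : 2 ≤ n) (hpn : p - 1 ≤ n + r) :
    X p r n = - X p (r+2) (n-2) := by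
  have hp2 : 2 ≤ p := hp.out.two_le
  obtain ⟨n₂, rfl⟩ : ∃ m, n = m + 2 := ⟨n - 2, by omega⟩
  have key1 : X p r (n₂ + 2)
      = ∑ j ∈ Finset.range (n₂ + 2),
          ((min (n₂ + 2 - j) (p - r) + r).choose (r+1) : ZMod p) * v p (n₂+1) j := by
    rw [X]
    have e1 : ∀ m ∈ Finset.range (p - r),
        ((m + r).choose r : ZMod p) * v p (n₂+2) m
        = ∑ j ∈ Finset.range (n₂ + 2),
            (if j < n₂ + 2 - m then ((m + r).choose r : ZMod p) * v p (n₂+1) j else 0) := by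
      intro m _
      rw [v_succ, Finset.mul_sum,
        sum_ext (fun j => ((m + r).choose r : ZMod p) * v p (n₂+1) j) (by omega : n₂ + 2 - m ≤ n₂ + 2)]
    rw [Finset.sum_congr rfl e1, Finset.sum_comm]
    apply Finset.sum_congr rfl
    intro j _
    have e2 : ∀ m, (if j < n₂ + 2 - m then ((m + r).choose r : ZMod p) * v p (n₂+1) j else 0)
        = (if m < n₂ + 2 - j then ((m + r).choose r : ZMod p) else 0) * v p (n₂+1) j := by
      intro m
      by_cases hm : j < n₂ + 2 - m
      · rw [if_pos hm, if_pos (by omega)]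
      · rw [if_neg hm, if_neg (by omega), zero_mul]
    rw [Finset.sum_congr rfl (fun m _ => e2 m), ← Finset.sum_mul, sum_trunc, hockey']
  have key2 : X p r (n₂ + 2)
      = ∑ t ∈ Finset.range (p - r - 1),
          (((t + (r+1)).choose (r+1) : ZMod p)) * ∑ i ∈ Finset.range t, v p n₂ i := by
    rw [key1, ← Finset.sum_range_reflect]
    have e3 : ∀ t ∈ Finset.range (n₂ + 2),
        ((min (n₂ + 2 - (n₂ + 2 - 1 - t)) (p - r) + r).choose (r+1) : ZMod p)
            * v p (n₂+1) (n₂ + 2 - 1 - t)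
        = (if t < p - r - 1 then (((t + (r+1)).choose (r+1) : ZMod p))
              * ∑ i ∈ Finset.range t, v p n₂ i else 0) := by
      intro t ht
      rw [Finset.mem_range] at ht
      have ht' : n₂ + 2 - 1 - t = n₂ + 1 - t := by omega
      rw [ht']
      by_cases htp : t < p - r - 1
      · have h1 : n₂ + 2 - (n₂ + 1 - t) = t + 1 := by omega
        have h3 : t + 1 + r = t + (r + 1) := by omega
        rw [h1, min_eq_left (by omega : t + 1 ≤ p - r), h3, if_pos htp, v_succ]
        have h4 : n₂ + 1 - (n₂ + 1 - t) = t := by omega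
        rw [h4]
      · have h1 : n₂ + 2 - (n₂ + 1 - t) = t + 1 := by omega
        have h3 : p - r + r = p := by omega
        rw [h1, min_eq_right (by omega : p - r ≤ t + 1), h3, if_neg htp,
          choose_p_cast p (by omega) (by omega), zero_mul]
    rw [Finset.sum_congr rfl e3, sum_trunc, min_eq_left (by omega)]
  rw [key2]
  have e4 : ∀ t ∈ Finset.range (p - r - 1),
      (((t + (r+1)).choose (r+1) : ZMod p)) * ∑ i ∈ Finset.range t, v p n₂ i
      = ∑ i ∈ Finset.range (p - r - 2),
          (if i < t then (((t + (r+1)).choose (r+1) : ZMod p)) * v p n₂ i else 0) := by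
    intro t ht
    rw [Finset.mem_range] at ht
    rw [Finset.mul_sum, sum_ext _ (by omega : t ≤ p - r - 2)]
  rw [Finset.sum_congr rfl e4, Finset.sum_comm]
  have e5 : ∀ i ∈ Finset.range (p - r - 2),
      (∑ t ∈ Finset.range (p - r - 1),
        (if i < t then (((t + (r+1)).choose (r+1) : ZMod p)) * v p n₂ i else 0))
      = -(((i + (r+2)).choose (r+2) : ZMod p) * v p n₂ i) := by
    intro i hi
    rw [Finset.mem_range] at hi
    have e6 : ∀ t, (if i < t then (((t + (r+1)).choose (r+1) : ZMod p)) * v p n₂ i else 0)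
        = (if i < t then (((t + (r+1)).choose (r+1) : ZMod p)) else 0) * v p n₂ i := by
      intro t
      by_cases h : i < t
      · rw [if_pos h, if_pos h]
      · rw [if_neg h, if_neg h, zero_mul]
    rw [Finset.sum_congr rfl (fun t _ => e6 t), ← Finset.sum_mul]
    rw [sum_tail (fun t => (((t + (r+1)).choose (r+1) : ZMod p))) i (p - r - 1)]
    rw [hockey', hockey', min_eq_left (by omega)]
    have h1 : p - r - 1 + (r + 1) = p := by omega
    have h2 : i + 1 + (r + 1) = i + (r + 2) := by omega
    rw [h1, h2, choose_p_cast p (by omega) (by omega), zero_sub, neg_mul]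
  rw [Finset.sum_congr rfl e5, Finset.sum_neg_distrib]
  rw [X]
  have : p - (r + 2) = p - r - 2 := by omega
  rw [this]
  congr 1

end modp
end EulerAux

namespace EulerAux
section modp
variable (p : ℕ) [hp : Fact p.Prime]

lemma v_zero_zero : v p 0 0 = 1 := by simp [v, u]

lemma v_one_zero : v p 1 0 = 1 := by simp [v, u_one_zero]

lemma v_01 {n : ℕ} (h : 2 ≤ n) : v p n 0 = v p n 1 := by rw [v, v, u_01 h]

lemma v_diff (N k : ℕ) (hk : k ≤ N) :
    v p (N+1) k = v p (N+1) (k+1) + v p N (N - k) := by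
  rw [v_succ, v_succ]
  have h1 : N + 1 - k = (N - k) + 1 := by omega
  have h2 : N + 1 - (k + 1) = N - k := by omega
  rw [h1, h2, Finset.sum_range_succ]

lemma X_terminal (hp3 : 3 ≤ p) {n : ℕ} (hn : 2 ≤ n) : X p (p-2) n = 0 := by
  rw [X]
  have h2 : p - (p - 2) = 2 := by omega
  rw [h2, Finset.sum_range_succ, Finset.sum_range_one]
  have c0 : ((0 + (p-2)).choose (p-2)) = 1 := by rw [zero_add, Nat.choose_self]
  have c1 : ((1 + (p-2)).choose (p-2)) = p - 1 := by
    have e : 1 + (p - 2) = p - 1 := by omega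
    have e2 : p - 2 = (p - 1) - 1 := by omega
    rw [e, e2, Nat.choose_symm (by omega), Nat.choose_one_right]
  rw [c0, c1]
  have cneg : (((p - 1 : ℕ)) : ZMod p) = -1 := by
    have : ((p : ℕ) : ZMod p) = 0 := ZMod.natCast_self p
    rw [Nat.cast_sub (by omega : 1 ≤ p), this]
    simp
  rw [cneg, ← v_01 p hn]
  push_cast
  ring

lemma X_chain (hp3 : 3 ≤ p) : ∀ s n : ℕ, 2*s ≤ p - 3 → 2*s + 2 ≤ n → X p (p - 2 - 2*s) n = 0 := by
  intro s
  induction s with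
  | zero =>
      intro n _ hn
      have e : p - 2 - 2*0 = p - 2 := by omega
      rw [e]
      exact X_terminal p hp3 (by omega)
  | succ s ih =>
      intro n hs hn
      have hstep := step p (r := p - 2 - 2*(s+1)) (n := n)
        (by omega) (by omega) (by omega)
      have e : p - 2 - 2*(s+1) + 2 = p - 2 - 2*s := by omega
      rw [e] at hstep
      rw [hstep, ih (n-2) (by omega) (by omega), neg_zero]

lemma X1_zero (hodd : p % 2 = 1) {n : ℕ} (hn : p - 1 ≤ n) : X p 1 n = 0 := by
  have hp3 : 3 ≤ p := by
    have := hp.out.two_le; omega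
  have := X_chain p hp3 ((p-3)/2) n (by omega) (by omega)
  have e : p - 2 - 2*((p-3)/2) = 1 := by omega
  rwa [e] at this

lemma X0_val (hodd : p % 2 = 1) : X p 0 (p-1) = (-1 : ZMod p)^((p-1)/2) := by
  have hp3 : 3 ≤ p := by have := hp.out.two_le; omega
  have key : ∀ s : ℕ, 2*s ≤ p - 1 → X p 0 (p-1) = (-1 : ZMod p)^s * X p (2*s) (p - 1 - 2*s) := by
    intro s
    induction s with
    | zero => intro _; simp
    | succ s ih =>
        intro hs
        rw [ih (by omega)]
        have hstep := step p (r := 2*s) (n := p - 1 - 2*s) (by omega) (by omega) (by omega)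
        have e1 : 2*s + 2 = 2*(s+1) := by omega
        have e2 : p - 1 - 2*s - 2 = p - 1 - 2*(s+1) := by omega
        rw [e1, e2] at hstep
        rw [hstep, pow_succ]
        ring
  have h2 := key ((p-1)/2) (by omega)
  have e1 : 2*((p-1)/2) = p - 1 := by omega
  rw [e1] at h2
  have e2 : p - 1 - (p-1) = 0 := by omega
  rw [e2] at h2
  have hX : X p (p-1) 0 = 1 := by
    rw [X]
    have e3 : p - (p-1) = 1 := by omega
    rw [e3, Finset.sum_range_one, zero_add, Nat.choose_self, v_zero_zero]
    simp
  rw [h2, hX, mul_one]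

end modp
end EulerAux

namespace EulerAux
section modp
variable (p : ℕ) [hp : Fact p.Prime]

lemma window (hodd : p % 2 = 1) :
    ∀ n : ℕ, ∀ a : ℕ, 1 ≤ a → a + (p-1) ≤ n → (∑ m ∈ Finset.Ico a (a + (p-1)), v p n m) = 0 := by
  have hp3 : 3 ≤ p := by have := hp.out.two_le; omega
  intro n
  induction n using Nat.strong_induction_on with
  | _ n IH =>
    have inner : ∀ d : ℕ, ∀ a, 1 ≤ a → a + (p-1) ≤ n → n - (p-1) - a = d →
        (∑ m ∈ Finset.Ico a (a + (p-1)), v p n m) = 0 := by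
      intro d
      induction d with
      | zero =>
          intro a ha han hd
          obtain ⟨n', rfl⟩ : ∃ m, n = m + 1 := ⟨n - 1, by omega⟩
          have haeq : a = n' + 1 - (p - 1) := by omega
          -- rightmost window
          rw [Finset.sum_Ico_eq_sum_range]
          have e1 : a + (p-1) - a = p - 1 := by omega
          rw [e1]
          have e2 : ∀ i ∈ Finset.range (p-1),
              v p (n'+1) (a + i)
              = ∑ j ∈ Finset.range (p-1), (if j < p - 1 - i then v p n' j else 0) := by
            intro i hi
            rw [Finset.mem_range] at hi
            rw [v_succ]
            have e3 : n' + 1 - (a + i) = p - 1 - i := by omega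
            rw [e3, sum_ext (fun j => v p n' j) (by omega : p - 1 - i ≤ p - 1)]
          rw [Finset.sum_congr rfl e2, Finset.sum_comm]
          have e4 : ∀ j ∈ Finset.range (p-1),
              (∑ i ∈ Finset.range (p-1), if j < p - 1 - i then v p n' j else 0)
              = ((p - 1 - j : ℕ) : ZMod p) * v p n' j := by
            intro j hj
            rw [Finset.mem_range] at hj
            have e5 : ∀ i, (if j < p - 1 - i then v p n' j else 0)
                = (if i < p - 1 - j then v p n' j else 0) := by
              intro i
              by_cases h : j < p - 1 - i
              · rw [if_pos h, if_pos (by omega)]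
              · rw [if_neg h, if_neg (by omega)]
            rw [Finset.sum_congr rfl (fun i _ => e5 i), sum_trunc,
              min_eq_left (by omega : p - 1 - j ≤ p - 1), Finset.sum_const, Finset.card_range,
              nsmul_eq_mul]
          rw [Finset.sum_congr rfl e4]
          -- now sum_j (p-1-j) * v = -X 1 n'
          have hX := X1_zero p hodd (n := n') (by omega)
          have combine : (∑ j ∈ Finset.range (p-1), ((p - 1 - j : ℕ) : ZMod p) * v p n' j)
              + X p 1 n' = 0 := by
            rw [X, ← Finset.sum_add_distrib]
            have e6 : ∀ j ∈ Finset.range (p-1),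
                ((p - 1 - j : ℕ) : ZMod p) * v p n' j
                  + ((j + 1).choose 1 : ZMod p) * v p n' j = 0 := by
              intro j hj
              rw [Finset.mem_range] at hj
              rw [Nat.choose_one_right, ← add_mul, ← Nat.cast_add]
              have e7 : p - 1 - j + (j + 1) = p := by omega
              rw [e7, ZMod.natCast_self, zero_mul]
            rw [Finset.sum_congr rfl e6, Finset.sum_const_zero]
          rw [hX, add_zero] at combine
          exact combine
      | succ d ihd =>
          intro a ha han hd
          obtain ⟨n', rfl⟩ : ∃ m, n = m + 1 := ⟨n - 1, by omega⟩
          have dec1 : (∑ m ∈ Finset.Ico a (a + p), v p (n'+1) m)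
              = (∑ m ∈ Finset.Ico a (a + (p-1)), v p (n'+1) m) + v p (n'+1) (a + (p-1)) := by
            have e : a + p = (a + (p-1)) + 1 := by omega
            rw [e, Finset.sum_Ico_succ_top (by omega)]
          have dec2 : (∑ m ∈ Finset.Ico a (a + p), v p (n'+1) m)
              = v p (n'+1) a + (∑ m ∈ Finset.Ico (a+1) ((a+1) + (p-1)), v p (n'+1) m) := by
            have e : (a+1) + (p-1) = a + p := by omega
            rw [e, Finset.sum_eq_sum_Ico_succ_bot (by omega : a < a + p)]
          have hS1 : (∑ m ∈ Finset.Ico (a+1) ((a+1) + (p-1)), v p (n'+1) m) = 0 :=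
            ihd (a+1) (by omega) (by omega) (by omega)
          have hdiff : v p (n'+1) a - v p (n'+1) (a + (p-1))
              = ∑ j ∈ Finset.Ico (n' + 1 - a - (p-1)) (n' + 1 - a), v p n' j := by
            rw [v_succ, v_succ, Finset.sum_Ico_eq_sub _ (by omega : n' + 1 - a - (p-1) ≤ n' + 1 - a)]
            have e : n' + 1 - (a + (p - 1)) = n' + 1 - a - (p-1) := by omega
            rw [e]
          have hwin : (∑ j ∈ Finset.Ico (n' + 1 - a - (p-1)) (n' + 1 - a), v p n' j) = 0 := by
            have hw := IH n' (by omega) (n' + 1 - a - (p-1)) (by omega) (by omega)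
            have e : (n' + 1 - a - (p-1)) + (p-1) = n' + 1 - a := by omega
            rwa [e] at hw
          have : (∑ m ∈ Finset.Ico a (a + (p-1)), v p (n'+1) m) + v p (n'+1) (a + (p-1))
              = v p (n'+1) a + 0 := by rw [← hS1, ← dec2, dec1]
          rw [add_zero] at this
          calc (∑ m ∈ Finset.Ico a (a + (p-1)), v p (n'+1) m)
              = v p (n'+1) a - v p (n'+1) (a + (p-1)) := by rw [← this]; ring
            _ = 0 := by rw [hdiff, hwin]
    intro a ha han
    exact inner (n - (p-1) - a) a ha han rfl

lemma shift (hodd : p % 2 = 1) {n k : ℕ} (hk : 1 ≤ k) (hkn : k + (p-1) ≤ n - 1) :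
    v p n (k + (p-1)) = v p n k := by
  have hp3 : 3 ≤ p := by have := hp.out.two_le; omega
  obtain ⟨n', rfl⟩ : ∃ m, n = m + 1 := ⟨n - 1, by omega⟩
  have hdiff : v p (n'+1) k - v p (n'+1) (k + (p-1))
      = ∑ j ∈ Finset.Ico (n' + 1 - k - (p-1)) (n' + 1 - k), v p n' j := by
    rw [v_succ, v_succ, Finset.sum_Ico_eq_sub _ (by omega : n' + 1 - k - (p-1) ≤ n' + 1 - k)]
    have e : n' + 1 - (k + (p - 1)) = n' + 1 - k - (p-1) := by omega
    rw [e]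
  have hwin : (∑ j ∈ Finset.Ico (n' + 1 - k - (p-1)) (n' + 1 - k), v p n' j) = 0 := by
    have hw := window p hodd n' (n' + 1 - k - (p-1)) (by omega) (by omega)
    have e : (n' + 1 - k - (p-1)) + (p-1) = n' + 1 - k := by omega
    rwa [e] at hw
  have := sub_eq_zero.mp (by rw [hdiff, hwin])
  exact this.symm

end modp
end EulerAux

namespace EulerAux
section modp
variable (p : ℕ) [hp : Fact p.Prime]

lemma vert (hodd : p % 2 = 1) :
    ∀ n k : ℕ, k + 1 ≤ n →
      v p (n + (p-1)) k = (-1 : ZMod p)^((p-1)/2) * v p n k := by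
  have hp3 : 3 ≤ p := by have := hp.out.two_le; omega
  set c : ZMod p := (-1 : ZMod p)^((p-1)/2) with hc
  intro n
  induction n with
  | zero => intro k hk; omega
  | succ n IH =>
    intro k hk
    rcases Nat.eq_zero_or_pos n with hn0 | hn1
    · -- n = 0, k = 0 : v p p 0 = c
      subst hn0
      have hk0 : k = 0 := by omega
      subst hk0
      have e1 : 0 + 1 + (p - 1) = p := by omega
      rw [e1, v_one_zero, mul_one]
      have e2 : v p p 0 = X p 0 (p-1) := by
        have hv := v_succ p (p-1) 0
        rw [show p - 1 + 1 = p from by omega] at hv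
        rw [hv, X]
        rw [show p - 0 = p from by omega]
        apply Finset.sum_congr rfl
        intro m _
        rw [Nat.choose_zero_right]
        push_cast
        ring
      rw [e2, X0_val p hodd]
    · -- n ≥ 1
      -- P k := v p (n+1+(p-1)) k - c * v p (n+1) k
      have top : v p (n + 1 + (p-1)) n = c * v p (n+1) n := by
        have e1 : v p (n+1) n = v p n 0 := by
          rw [v_succ]
          have : n + 1 - n = 1 := by omega
          rw [this, Finset.sum_range_one]
        have e2 : v p (n + 1 + (p-1)) n = v p (n + 1 + (p-1)) (n + (p-1)) := by
          have hs := shift p hodd (n := n + 1 + (p-1)) (k := n) (by omega) (by omega)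
          rw [hs]
        have e3 : v p (n + 1 + (p-1)) (n + (p-1)) = v p (n + (p-1)) 0 := by
          obtain ⟨N, hN⟩ : ∃ N, n + (p-1) = N := ⟨n + (p-1), rfl⟩
          rw [hN, show n + 1 + (p-1) = N + 1 by omega, v_succ, show N + 1 - N = 1 by omega,
            Finset.sum_range_one]
        rw [e2, e3, IH 0 (by omega), e1]
      have mid : ∀ j : ℕ, 1 ≤ j → j + 1 ≤ n →
          v p (n + 1 + (p-1)) j - c * v p (n+1) j
            = v p (n + 1 + (p-1)) (j+1) - c * v p (n+1) (j+1) := by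
        intro j hj1 hjn
        have d1 : v p (n + 1 + (p-1)) j
            = v p (n + 1 + (p-1)) (j+1) + v p (n + (p-1)) (n + (p-1) - j) := by
          have := v_diff p (n + (p-1)) j (by omega)
          rwa [show n + (p-1) + 1 = n + 1 + (p-1) by omega] at this
        have d2 : v p (n+1) j = v p (n+1) (j+1) + v p n (n - j) := by
          exact v_diff p n j (by omega)
        have d3 : v p (n + (p-1)) (n + (p-1) - j) = c * v p n (n - j) := by
          have e : n + (p-1) - j = (n - j) + (p-1) := by omega
          rw [e]
          have hs := shift p hodd (n := n + (p-1)) (k := n - j) (by omega) (by omega)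
          rw [hs]
          exact IH (n - j) (by omega)
        rw [d1, d2, d3]
        ring
      have first : v p (n + 1 + (p-1)) 0 - c * v p (n+1) 0
          = v p (n + 1 + (p-1)) 1 - c * v p (n+1) 1 := by
        rw [v_01 p (show 2 ≤ n + 1 + (p-1) by omega), v_01 p (show 2 ≤ n + 1 by omega)]
      have all : ∀ j : ℕ, j ≤ n →
          v p (n + 1 + (p-1)) (n - j) - c * v p (n+1) (n - j) = 0 := by
        intro j
        induction j with
        | zero =>
            intro _
            rw [show n - 0 = n by omega]
            rw [top]; ring
        | succ j ihj =>
            intro hjn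
            rcases Nat.eq_zero_or_pos (n - (j+1)) with hz | hpos
            · rw [hz]
              have hj : n - j = 1 := by omega
              have h1 := ihj (by omega)
              rw [hj] at h1
              rw [first]
              exact h1
            · have := mid (n - (j+1)) (by omega) (by omega)
              rw [show n - (j+1) + 1 = n - j by omega] at this
              rw [this]
              exact ihj (by omega)
        -- done
      have := all (n - k) (by omega)
      rw [show n - (n - k) = k by omega] at this
      exact sub_eq_zero.mp this

lemma vert_E (hodd : p % 2 = 1) {n : ℕ} (hn : 1 ≤ n) :
    v p (n + (p-1)) 0 = (-1 : ZMod p)^((p-1)/2) * v p n 0 :=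
  vert p hodd n 0 (by omega)

lemma u_pow (hodd : p % 2 = 1) :
    ∀ t : ℕ, (u (2 + t * (p-1)) 0 : ZMod p) = ((-1 : ZMod p)^((p-1)/2))^t := by
  intro t
  induction t with
  | zero =>
      simp [show 2 + 0 * (p-1) = 2 by omega, u_two_zero]
  | succ t ih =>
      have e : 2 + (t+1) * (p-1) = (2 + t * (p-1)) + (p-1) := by ring
      rw [e]
      have := vert_E p hodd (n := 2 + t * (p-1)) (by omega)
      rw [v, v] at this
      rw [this, ih, pow_succ]
      ring

lemma u_ne_zero_mod (hodd : p % 2 = 1) (t : ℕ) :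
    ¬ (p ∣ u (2 + t * (p-1)) 0) := by
  intro hdvd
  have h0 : (u (2 + t * (p-1)) 0 : ZMod p) = 0 :=
    (ZMod.natCast_eq_zero_iff _ _).mpr hdvd
  rw [u_pow p hodd t] at h0
  have h1 : ((-1 : ZMod p)^((p-1)/2))^t ≠ 0 := by
    apply pow_ne_zero
    apply pow_ne_zero
    simp only [ne_eq, neg_eq_zero]
    exact one_ne_zero
  exact h1 h0

end modp

/-- mod 2 structure -/
lemma u_mod_two : ∀ n : ℕ, 1 ≤ n →
    (n % 2 = 1 → ∀ k, (u n k : ZMod 2) = if k = n - 1 then 1 else 0)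
    ∧ (n % 2 = 0 → ∀ k, (u n k : ZMod 2) = if k ≤ 1 then 1 else 0) := by
  intro n
  induction n with
  | zero => omega
  | succ n IH =>
    intro _
    have cast_succ : ∀ k, ((u (n+1) k : ℕ) : ZMod 2)
        = ∑ j ∈ Finset.range (n + 1 - k), (u n j : ZMod 2) := by
      intro k
      rw [u_succ, Nat.cast_sum]
    rcases Nat.eq_zero_or_pos n with hn0 | hn1
    · subst hn0
      constructor
      · intro _ k
        rw [cast_succ]
        rcases Nat.eq_zero_or_pos k with rfl | hk
        · simp [u]
        · rw [show 0 + 1 - k = 0 by omega]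
          simp only [Finset.range_zero, Finset.sum_empty]
          rw [if_neg (by omega)]
      · intro h; omega
    · constructor
      · -- n+1 odd, n even ≥ 2
        intro hodd k
        have hn2 : n % 2 = 0 := by omega
        have hIH := (IH (by omega)).2 hn2
        rw [cast_succ, Finset.sum_congr rfl (fun j _ => hIH j)]
        have e : ∀ j : ℕ, (if j ≤ 1 then (1 : ZMod 2) else 0) = (if j < 2 then (1 : ZMod 2) else 0) := by
          intro j; by_cases h : j ≤ 1
          · rw [if_pos h, if_pos (by omega)]
          · rw [if_neg h, if_neg (by omega)]
        rw [Finset.sum_congr rfl (fun j _ => e j), sum_trunc, Finset.sum_const, Finset.card_range,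
          nsmul_eq_mul, mul_one]
        -- now : (min 2 (n+1-k) : ℕ) cast
        rcases lt_trichotomy k n with hlt | heq | hgt
        · rw [min_eq_left (by omega : 2 ≤ n + 1 - k), if_neg (by omega)]
          decide
        · subst heq
          rw [show min 2 (k + 1 - k) = 1 by omega, if_pos (by omega)]
          decide
        · rw [show min 2 (n + 1 - k) = 0 by omega, if_neg (by omega)]
          decide
      · -- n+1 even, n odd
        intro heven k
        have hn2 : n % 2 = 1 := by omega
        have hIH := (IH (by omega)).1 hn2
        rw [cast_succ, Finset.sum_congr rfl (fun j _ => hIH j)]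
        rw [Finset.sum_ite_eq' (Finset.range (n + 1 - k)) (n-1) (fun _ => (1 : ZMod 2))]
        by_cases hk : k ≤ 1
        · rw [if_pos (by simp only [Finset.mem_range]; omega), if_pos hk]
        · rw [if_neg (by simp only [Finset.mem_range]; omega), if_neg hk]

lemma u_even_not_dvd {n : ℕ} (hn : 2 ≤ n) (heven : n % 2 = 0) : ¬ (2 ∣ u n 0) := by
  intro hdvd
  have h0 : (u n 0 : ZMod 2) = 0 := (ZMod.natCast_eq_zero_iff _ _).mpr hdvd
  have := (u_mod_two n (by omega)).2 heven 0
  rw [if_pos (by omega)] at this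
  rw [this] at h0
  exact one_ne_zero h0

end EulerAux


namespace EulerAux

lemma Acard_eq_u : ∀ n k : ℕ, Acard n k = u n k := by
  intro n
  induction n with
  | zero =>
      intro k
      rw [Acard_zero_row]
      rfl
  | succ n IH =>
      intro k
      by_cases hk : k ≤ n
      · rw [Acard_rec n k hk, u_succ]
        exact Finset.sum_congr rfl (fun j _ => IH j)
      · rcases Nat.lt_or_ge k (n+2) with hlt | hge
        · have hk1 : k = n + 1 := by omega
          subst hk1
          rw [Acard_top (by omega), u_of_le (by omega) (by omega)]
        · rw [Acard_zero_of_ge (by omega), u_of_le (by omega) (by omega)]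

lemma euler_eq_u : ∀ n : ℕ, eulerNumber n = u n 0 := by
  intro n
  cases n with
  | zero =>
      have hall : ∀ f : Equiv.Perm (Fin 0), IsAlternating f := by
        intro f i h
        omega
      have hne : Nonempty {f : Equiv.Perm (Fin 0) // IsAlternating f} := ⟨⟨1, hall 1⟩⟩
      have hsub : Subsingleton {f : Equiv.Perm (Fin 0) // IsAlternating f} := by
        constructor
        rintro ⟨f, _⟩ ⟨g, _⟩
        apply Subtype.ext
        apply Equiv.ext
        intro x
        exact x.elim0
      rw [eulerNumber, Nat.card_unique]
      rfl
  | succ n =>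
      rw [euler_partition, u_succ]
      have e : n + 1 - 0 = n + 1 := by omega
      rw [e]
      exact Finset.sum_congr rfl (fun j _ => Acard_eq_u n j)

end EulerAux

/-- For every finite set of primes `Q`, there are infinitely many `n` such that
`q ∤ E_n` for all `q ∈ Q`. -/
theorem infinitely_many_eulerNumber_not_dvd (Q : Finset ℕ) (hQ : ∀ q ∈ Q, q.Prime) :
    ∀ N : ℕ, ∃ n : ℕ, n > N ∧ ∀ q ∈ Q, ¬ q ∣ eulerNumber n := by
  classical
  intro N
  set P : ℕ := ∏ q ∈ Q, (q - 1) with hP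
  have hP1 : 1 ≤ P := by
    apply Finset.one_le_prod'
    intro q hq
    have := (hQ q hq).two_le
    omega
  have hmul : N + 1 ≤ (N+1) * (2*P) := by
    calc N + 1 = (N+1) * 1 := by ring
    _ ≤ (N+1) * (2*P) := Nat.mul_le_mul_left _ (by omega)
  refine ⟨2 + (N+1) * (2*P), by omega, ?_⟩
  intro q hq
  haveI : Fact q.Prime := ⟨hQ q hq⟩
  rw [EulerAux.euler_eq_u]
  by_cases h2 : q = 2
  · subst h2
    apply EulerAux.u_even_not_dvd (by omega)
    have e : (N+1) * (2*P) = 2 * ((N+1)*P) := by ring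
    omega
  · have hodd : q % 2 = 1 := Nat.odd_iff.mp ((hQ q hq).odd_of_ne_two h2)
    have hdvd : (q-1) ∣ P := Finset.dvd_prod_of_mem (fun q => q - 1) hq
    obtain ⟨M, hM⟩ := hdvd
    have e : 2 + (N+1) * (2*P) = 2 + ((N+1)*2*M) * (q-1) := by rw [hM]; ring
    rw [e]
    exact EulerAux.u_ne_zero_mod q hodd ((N+1)*2*M)
end

section
/- With A(P,R) as defined (P a finite poset on X, R a good set, A(P,R) on X × {0,1} with (x,0) < (y,1) iff (x,y) ∈ R), the map M sending each x ∈ X to the pair {(x,0),(x,1)} is the unique perfect matching of the Hasse diagram of A(P,R) — equivalently, the unique way to partition the elements of A(P,R) into 2-element chains. -/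
/-- The matching pairing `(x,0)` with `(x,1)` is the unique way to partition the
elements of `A(P,R)` into 2-element chains.  A partition into 2-element chains is
encoded by a fixed-point-free involution `m` such that every element is strictly
comparable (in `A(P,R)`) with its partner. -/
theorem APR_unique_perfect_matching {X : Type*} [Fintype X] [PartialOrder X]
    (R : Set (X × X))
    (hdiag : ∀ x : X, (x, x) ∈ R)
    (hcov : ∀ x y : X, x ⋖ y → (x, y) ∈ R)
    (hord : ∀ x y : X, (x, y) ∈ R → x ≤ y)
    (lt : X × Bool → X × Bool → Prop)
    (hlt : ∀ a b, lt a b ↔ a.2 = false ∧ b.2 = true ∧ (a.1, b.1) ∈ R)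
    (m : X × Bool → X × Bool)
    (hinv : ∀ a, m (m a) = a)
    (hfpf : ∀ a, m a ≠ a)
    (hcomp : ∀ a, lt a (m a) ∨ lt (m a) a) :
    ∀ (x : X) (b : Bool), m (x, b) = (x, !b) := by
  classical
  -- the partner of (x, false) has second coordinate true, and vice versa
  have hsnd0 : ∀ x : X, (m (x, false)).2 = true := by
    intro x
    rcases hcomp (x, false) with h | h
    · exact ((hlt _ _).mp h).2.1
    · exact absurd ((hlt _ _).mp h).2.1 (by simp)
  have hsnd1 : ∀ x : X, (m (x, true)).2 = false := by
    intro x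
    rcases hcomp (x, true) with h | h
    · exact absurd ((hlt _ _).mp h).1 (by simp)
    · exact ((hlt _ _).mp h).1
  set f : X → X := fun x => (m (x, false)).1 with hf
  set g : X → X := fun x => (m (x, true)).1 with hg
  have hm0 : ∀ x : X, m (x, false) = (f x, true) := by
    intro x; ext <;> simp [hf, hsnd0 x]
  have hm1 : ∀ x : X, m (x, true) = (g x, false) := by
    intro x; ext <;> simp [hg, hsnd1 x]
  have hgf : ∀ x : X, g (f x) = x := by
    intro x
    have := hinv (x, false)
    rw [hm0 x, hm1 (f x)] at this
    exact (Prod.mk.injEq _ _ _ _ ▸ this).1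
  have hfg : ∀ x : X, f (g x) = x := by
    intro x
    have := hinv (x, true)
    rw [hm1 x, hm0 (g x)] at this
    exact (Prod.mk.injEq _ _ _ _ ▸ this).1
  have hle : ∀ x : X, x ≤ f x := by
    intro x
    rcases hcomp (x, false) with h | h
    · exact hord _ _ (by simpa [hm0 x] using ((hlt _ _).mp h).2.2)
    · exact absurd ((hlt _ _).mp h).2.1 (by simp)
  -- f is a permutation
  let σ : Equiv.Perm X := ⟨f, g, hgf, hfg⟩
  have key : ∀ (k : ℕ) (x : X), x ≤ (σ ^ k) x := by
    intro k
    induction k with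
    | zero => intro x; simp
    | succ n ih =>
      intro x
      calc x ≤ σ x := hle x
        _ ≤ (σ ^ n) (σ x) := ih (σ x)
        _ = (σ ^ (n + 1)) x := by
            rw [pow_succ]; rfl
  have hfix : ∀ x : X, f x = x := by
    intro x
    have hn : 0 < orderOf σ := orderOf_pos σ
    have h1 : x ≤ σ x := hle x
    have h2 : σ x ≤ (σ ^ (orderOf σ - 1)) (σ x) := key _ (σ x)
    have h3 : (σ ^ (orderOf σ - 1)) (σ x) = x := by
      have h4 : (σ ^ (orderOf σ - 1)) (σ x) = (σ ^ (orderOf σ - 1) * σ) x := rfl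
      rw [h4, pow_sub_one_mul hn.ne' σ, pow_orderOf_eq_one σ]; rfl
    have : σ x = x := le_antisymm (h2.trans_eq h3) h1
    exact this
  have hgfix : ∀ x : X, g x = x := fun x => by
    conv_lhs => rw [← hfix x]
    exact hgf x
  intro x b
  cases b
  · rw [hm0 x, hfix x]; rfl
  · rw [hm1 x, hgfix x]; rfl
end

section
/- For every positive integer a, there exists a poset P of height at most 2 with sign imbalance si(P) = a. (Existence version of Corollary 1.4, without the size bound.) -/
/-- `α` is a poset of height at most 2 whose sign imbalance equals `a`. -/
def IsHeight2WithSignImbalance (a : ℕ) (α : Type) [Fintype α] [PartialOrder α] : Prop :=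
  (¬ ∃ x y z : α, x < y ∧ y < z) ∧
    ∀ f : α ≃ Fin (Fintype.card α), (signedSum f).natAbs = a


/-!
Write `A(Q)` for the height-two poset on two copies of a finite poset `Q`, in which the bottom
copy of `p` lies below the top copy of `q` exactly when `p ≤ q`.

Group the positions `0, 1, …` of a linear extension into blocks `{2i, 2i + 1}`. Swapping the two
entries of the first block that does not hold a comparable pair is a sign-reversing involution
on linear extensions, so only *paired* extensions, in which every block holds a comparable pair,
contribute to the signed sum. In a paired extension of `A(Q)` the bottoms fill the even and the
tops the odd positions; the block of the bottom copy of `p` is never later than that of its top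
copy, and both assignments are bijections onto the blocks, so the two copies of each `p` share
a block. Hence the paired extensions of `A(Q)` are exactly the linear extensions of `Q` with
every element doubled. They all have the same sign, because moving a block of two positions is
an even permutation. So `si(A(Q)) = e(Q)`, and the disjoint union of an `m`-chain and a point
has `m + 1` linear extensions.
-/

open Equiv Finset

section PairSwap

variable {α : Type*} {n : ℕ}

def pairSwap (n i : ℕ) : Perm (Fin n) :=
  if h : 2 * i + 1 < n then swap ⟨2 * i, by omega⟩ ⟨2 * i + 1, h⟩ else 1

theorem sign_pairSwap {i : ℕ} (h : 2 * i + 1 < n) : Perm.sign (pairSwap n i) = -1 := by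
  rw [pairSwap, dif_pos h, Perm.sign_swap]
  simp [Fin.ext_iff]

theorem pairSwap_involutive (n i : ℕ) : Function.Involutive (pairSwap n i) := by
  unfold pairSwap
  split_ifs
  exacts [swap_apply_self _ _, fun _ => rfl]

theorem sign_symm_trans_trans_pairSwap (f ℓ : α ≃ Fin n) {i : ℕ} (h : 2 * i + 1 < n) :
    Perm.sign (f.symm.trans (ℓ.trans (pairSwap n i))) = -Perm.sign (f.symm.trans ℓ) := by
  rw [← trans_assoc, show (f.symm.trans ℓ).trans (pairSwap n i) = pairSwap n i * f.symm.trans ℓ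
    from rfl, Perm.sign_mul, sign_pairSwap h, neg_one_mul]

end PairSwap

section LinearExtension

variable {α : Type*} [PartialOrder α] {n : ℕ}

theorem IsLinearExtension.strictMono {ℓ : α ≃ Fin n} (hℓ : IsLinearExtension ℓ) :
    StrictMono ℓ :=
  Monotone.strictMono_of_injective hℓ ℓ.injective

theorem IsLinearExtension.trans_swap {ℓ : α ≃ Fin n} (hℓ : IsLinearExtension ℓ) {p q : Fin n}
    (hpq : (q : ℕ) = p + 1) (hunrel : ¬ ℓ.symm p < ℓ.symm q) :
    IsLinearExtension (ℓ.trans (swap p q)) := by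
  intro x y hxy
  rcases hxy.eq_or_lt with rfl | hlt
  · exact le_rfl
  have hxy' := hℓ.strictMono hlt
  have hne : ¬ (ℓ x = p ∧ ℓ y = q) := by
    rintro ⟨rfl, rfl⟩
    simp only [symm_apply_apply] at hunrel
    exact hunrel hlt
  simp only [trans_apply, swap_apply_def]
  split_ifs <;> simp only [Fin.le_def, Fin.lt_def, Fin.ext_iff] at * <;> omega

def IsUnpairedAt (ℓ : α ≃ Fin n) (i : ℕ) : Prop :=
  ∃ h : 2 * i + 1 < n, ¬ ℓ.symm ⟨2 * i, by omega⟩ < ℓ.symm ⟨2 * i + 1, h⟩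

def IsPaired (ℓ : α ≃ Fin n) : Prop :=
  ∀ i, ¬ IsUnpairedAt ℓ i

theorem IsPaired.lt {ℓ : α ≃ Fin n} (hℓ : IsPaired ℓ) (i : ℕ) (h : 2 * i + 1 < n) :
    ℓ.symm ⟨2 * i, by omega⟩ < ℓ.symm ⟨2 * i + 1, h⟩ :=
  not_not.mp fun hlt => hℓ i ⟨h, hlt⟩

noncomputable def firstUnpaired (ℓ : α ≃ Fin n) : ℕ :=
  sInf {i | IsUnpairedAt ℓ i}

theorem isUnpairedAt_firstUnpaired {ℓ : α ≃ Fin n} (hℓ : ¬ IsPaired ℓ) :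
    IsUnpairedAt ℓ (firstUnpaired ℓ) := by
  simp only [IsPaired, not_forall, not_not] at hℓ
  exact Nat.sInf_mem hℓ

theorem IsUnpairedAt.isLinearExtension_trans_pairSwap {ℓ : α ≃ Fin n} (hℓ : IsLinearExtension ℓ)
    {i : ℕ} (hi : IsUnpairedAt ℓ i) : IsLinearExtension (ℓ.trans (pairSwap n i)) := by
  obtain ⟨h, hunrel⟩ := hi
  rw [pairSwap, dif_pos h]
  exact hℓ.trans_swap rfl hunrel

theorem IsUnpairedAt.isUnpairedAt_trans_pairSwap_iff {ℓ : α ≃ Fin n}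
    (hℓ : IsLinearExtension ℓ) {i : ℕ} (hi : IsUnpairedAt ℓ i) (j : ℕ) :
    IsUnpairedAt (ℓ.trans (pairSwap n i)) j ↔ IsUnpairedAt ℓ j := by
  obtain ⟨h, hunrel⟩ := hi
  rw [pairSwap, dif_pos h]
  rcases eq_or_ne j i with rfl | hji
  · refine iff_of_true ⟨h, fun hlt => ?_⟩ ⟨h, hunrel⟩
    have := hℓ.strictMono hlt
    simp [swap_apply_left, swap_apply_right, Fin.lt_def] at this
  · refine exists_congr fun hj => ?_
    rw [symm_trans_apply, symm_trans_apply, symm_swap, swap_apply_of_ne_of_ne,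
      swap_apply_of_ne_of_ne] <;> simp [Fin.ext_iff] <;> omega

variable [Fintype α]

theorem signedSum_eq_sign_mul (f g : α ≃ Fin n) :
    signedSum f = (Perm.sign (f.symm.trans g) : ℤ) * signedSum g := by
  rw [signedSum, signedSum, mul_sum]
  refine sum_congr rfl fun ℓ _ => ?_
  split_ifs
  · rw [show f.symm.trans ℓ = g.symm.trans ℓ * f.symm.trans g by ext; simp [Perm.mul_apply],
      Perm.sign_mul, Units.val_mul, mul_comm]
  · rw [mul_zero]

open scoped Classical in
theorem signedSum_eq_sum_paired (f : α ≃ Fin n) :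
    signedSum f =
      ∑ ℓ with IsLinearExtension ℓ ∧ IsPaired ℓ, (Perm.sign (f.symm.trans ℓ) : ℤ) := by
  rw [signedSum, ← sum_filter, ← sum_filter_add_sum_filter_not _ IsPaired, filter_filter,
    add_eq_left]
  refine sum_involution (fun ℓ _ => ℓ.trans (pairSwap n (firstUnpaired ℓ)))
    (fun ℓ hℓ => ?_) (fun ℓ hℓ _ => ?_) (fun ℓ hℓ => ?_) (fun ℓ hℓ => ?_) <;>
  simp only [mem_filter, mem_univ, true_and] at hℓ <;>
  obtain ⟨hle, hnp⟩ := hℓ <;>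
  have hi := isUnpairedAt_firstUnpaired hnp
  · rw [sign_symm_trans_trans_pairSwap f ℓ hi.1, Units.val_neg, add_neg_cancel]
  · intro heq
    have hs : pairSwap n (firstUnpaired ℓ) = 1 := by
      ext x
      simpa using congrArg (fun ℓ' => (ℓ' (ℓ.symm x) : ℕ)) heq
    simpa [hs] using sign_pairSwap hi.1
  · simp only [mem_filter, mem_univ, true_and]
    exact ⟨hi.isLinearExtension_trans_pairSwap hle,
      fun hp => hp _ ((hi.isUnpairedAt_trans_pairSwap_iff hle _).mpr hi)⟩
  · have hfirst : firstUnpaired (ℓ.trans (pairSwap n (firstUnpaired ℓ))) = firstUnpaired ℓ :=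
      congrArg sInf (Set.ext (hi.isUnpairedAt_trans_pairSwap_iff hle))
    ext x
    simp only [hfirst, trans_apply, pairSwap_involutive _ _ _]

end LinearExtension

theorem Function.Bijective.eq_of_forall_le {ι : Type*} [Fintype ι] {N : ℕ} {f g : ι → Fin N}
    (hf : f.Bijective) (hg : g.Bijective) (hfg : ∀ i, f i ≤ g i) : f = g := by
  have hsum : ∑ i, (f i : ℕ) = ∑ i, (g i : ℕ) := by
    rw [hf.sum_comp (fun k : Fin N => (k : ℕ)), hg.sum_comp (fun k : Fin N => (k : ℕ))]
  funext i
  exact Fin.ext <| (sum_eq_sum_iff_of_le fun i _ => Fin.le_def.mp (hfg i)).mp hsum i (mem_univ i)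

/-- The poset `A(Q, R)` of the paper with `R` all relations of `Q`: layer `0` holds the
bottom copies, layer `1` the top copies. -/
@[ext]
structure TwoLayer (Q : Type*) where
  elem : Q
  layer : Fin 2

namespace TwoLayer

variable {Q : Type*} {N : ℕ}

def equivProd : TwoLayer Q ≃ Q × Fin 2 where
  toFun x := (x.elem, x.layer)
  invFun x := ⟨x.1, x.2⟩
  left_inv _ := rfl
  right_inv _ := rfl

instance [Fintype Q] : Fintype (TwoLayer Q) :=
  Fintype.ofEquiv _ equivProd.symm

theorem card_eq [Fintype Q] : Fintype.card (TwoLayer Q) = Fintype.card Q * 2 := by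
  rw [Fintype.card_congr equivProd, Fintype.card_prod, Fintype.card_fin]

def lift (σ : Q ≃ Fin N) : TwoLayer Q ≃ Fin (N * 2) :=
  (equivProd.trans (σ.prodCongr (Equiv.refl _))).trans finProdFinEquiv

@[simp]
theorem lift_apply_val (σ : Q ≃ Fin N) (x : TwoLayer Q) :
    (lift σ x : ℕ) = x.layer + 2 * σ x.elem :=
  rfl

theorem lift_injective : Function.Injective (lift : (Q ≃ Fin N) → TwoLayer Q ≃ Fin (N * 2)) := by
  intro σ τ h
  ext p
  have := congrArg (fun ℓ => (ℓ ⟨p, 0⟩ : ℕ)) h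
  simp only [lift_apply_val] at this
  omega

theorem sign_lift_symm_trans_lift (g σ : Q ≃ Fin N) :
    Perm.sign ((lift g).symm.trans (lift σ)) = 1 := by
  have : (lift g).symm.trans (lift σ) = (finProdFinEquiv.symm.trans
      ((g.symm.trans σ).prodCongr (Equiv.refl (Fin 2)))).trans finProdFinEquiv := by
    ext x
    simp [lift, equivProd]
  rw [this, Perm.sign_symm_trans_trans, prodCongr_refl_right, Perm.sign_prodCongrLeft,
    Fin.prod_univ_two, Int.units_mul_self]

variable [PartialOrder Q]

instance : PartialOrder (TwoLayer Q) where
  le x y := x = y ∨ x.layer < y.layer ∧ x.elem ≤ y.elem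
  le_refl _ := Or.inl rfl
  le_trans x y z := by
    rintro (rfl | hxy) (rfl | hyz)
    · exact Or.inl rfl
    · exact Or.inr hyz
    · exact Or.inr hxy
    · omega
  le_antisymm x y := by
    rintro (rfl | ⟨hxy, -⟩) (h | ⟨hyx, -⟩)
    · rfl
    · rfl
    · exact h.symm
    · omega

theorem le_iff {x y : TwoLayer Q} : x ≤ y ↔ x = y ∨ x.layer < y.layer ∧ x.elem ≤ y.elem :=
  Iff.rfl

theorem lt_iff {x y : TwoLayer Q} : x < y ↔ x.layer < y.layer ∧ x.elem ≤ y.elem := by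
  rw [lt_iff_le_and_ne, le_iff]
  constructor
  · rintro ⟨rfl | h, hne⟩
    exacts [absurd rfl hne, h]
  · exact fun h => ⟨Or.inr h, fun hxy => (hxy ▸ h.1).false⟩

theorem not_exists_lt_lt : ¬ ∃ x y z : TwoLayer Q, x < y ∧ y < z := by
  rintro ⟨x, y, z, hxy, hyz⟩
  have h₁ := (lt_iff.mp hxy).1
  have h₂ := (lt_iff.mp hyz).1
  omega

theorem isLinearExtension_lift {σ : Q ≃ Fin N} (hσ : IsLinearExtension σ) :
    IsLinearExtension (lift σ) := by
  intro x y hxy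
  rcases le_iff.mp hxy with rfl | ⟨hlayer, helem⟩
  · exact le_rfl
  have := hσ _ _ helem
  rw [Fin.le_def, lift_apply_val, lift_apply_val]
  rw [Fin.le_def] at this
  rw [Fin.lt_def] at hlayer
  omega

theorem isPaired_lift (σ : Q ≃ Fin N) : IsPaired (lift σ) := by
  rintro i ⟨h, hunrel⟩
  have hi : i < N := by omega
  have h₀ : (lift σ).symm ⟨2 * i, by omega⟩ = ⟨σ.symm ⟨i, hi⟩, 0⟩ := by
    rw [symm_apply_eq]; ext; simp
  have h₁ : (lift σ).symm ⟨2 * i + 1, h⟩ = ⟨σ.symm ⟨i, hi⟩, 1⟩ := by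
    rw [symm_apply_eq]; ext; simp; omega
  rw [h₀, h₁, lt_iff] at hunrel
  exact hunrel ⟨Fin.zero_lt_one, le_rfl⟩

theorem layer_eq_of_isPaired {ℓ : TwoLayer Q ≃ Fin (N * 2)} (hp : IsPaired ℓ)
    (x : TwoLayer Q) : (x.layer : ℕ) = ℓ x % 2 := by
  have hlt := lt_iff.mp (hp.lt ((ℓ x : ℕ) / 2) (by omega))
  rw [Fin.lt_def] at hlt
  rcases Nat.mod_two_eq_zero_or_one (ℓ x) with h | h
  · have hx : ℓ.symm ⟨2 * ((ℓ x : ℕ) / 2), by omega⟩ = x := by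
      rw [symm_apply_eq, Fin.ext_iff]; dsimp only; omega
    rw [hx] at hlt
    omega
  · have hx : ℓ.symm ⟨2 * ((ℓ x : ℕ) / 2) + 1, by omega⟩ = x := by
      rw [symm_apply_eq, Fin.ext_iff]; dsimp only; omega
    rw [hx] at hlt
    omega

theorem exists_lift_eq_of_isPaired [Fintype Q] {ℓ : TwoLayer Q ≃ Fin (N * 2)}
    (hℓ : IsLinearExtension ℓ) (hp : IsPaired ℓ) :
    ∃ σ : Q ≃ Fin N, IsLinearExtension σ ∧ lift σ = ℓ := by
  let half (j : Fin 2) (p : Q) : Fin N := ⟨(ℓ ⟨p, j⟩ : ℕ) / 2, by omega⟩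
  have hval (x : TwoLayer Q) : (ℓ x : ℕ) = x.layer + 2 * half x.layer x.elem := by
    obtain ⟨p, j⟩ := x
    have := layer_eq_of_isPaired hp ⟨p, j⟩
    dsimp only [half] at *
    omega
  have hcard : Fintype.card Q = N := by
    simpa [card_eq] using Fintype.card_congr ℓ
  have hbij (j : Fin 2) : (half j).Bijective := by
    refine (Fintype.bijective_iff_injective_and_card _).mpr ⟨fun p q hpq => ?_, by simp [hcard]⟩
    have h₁ := hval ⟨p, j⟩
    have h₂ := hval ⟨q, j⟩
    dsimp only at h₁ h₂
    have : (⟨p, j⟩ : TwoLayer Q) = ⟨q, j⟩ := ℓ.injective (Fin.ext (by rw [h₁, h₂, hpq]))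
    exact congrArg elem this
  have hmono (p q : Q) (hpq : p ≤ q) : half 0 p ≤ half 1 q := by
    have := hℓ ⟨p, 0⟩ ⟨q, 1⟩ (Or.inr ⟨Fin.zero_lt_one, hpq⟩)
    rw [Fin.le_def, hval, hval] at this
    rw [Fin.le_def]
    dsimp only at *
    omega
  have heq : half 0 = half 1 := (hbij 0).eq_of_forall_le (hbij 1) fun p => hmono p p le_rfl
  have hhalf (j : Fin 2) : half j = half 0 := by
    fin_cases j
    exacts [rfl, heq.symm]
  refine ⟨Equiv.ofBijective _ (hbij 0), fun p q hpq => ?_, ?_⟩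
  · simpa only [ofBijective_apply, heq] using hmono p q hpq
  · ext x
    rw [lift_apply_val, hval, hhalf x.layer, ofBijective_apply]

open scoped Classical in
theorem signedSum_lift [Fintype Q] (g : Q ≃ Fin N) :
    signedSum (lift g) = Nat.card {σ : Q ≃ Fin N // IsLinearExtension σ} := by
  have hpaired : ({ℓ | IsLinearExtension ℓ ∧ IsPaired ℓ} : Finset (TwoLayer Q ≃ Fin (N * 2))) =
      ({σ | IsLinearExtension σ} : Finset (Q ≃ Fin N)).map ⟨lift, lift_injective⟩ := by
    ext ℓ
    simp only [mem_filter, mem_univ, true_and, mem_map, Function.Embedding.coeFn_mk]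
    constructor
    · rintro ⟨hℓ, hp⟩
      exact exists_lift_eq_of_isPaired hℓ hp
    · rintro ⟨σ, hσ, rfl⟩
      exact ⟨isLinearExtension_lift hσ, isPaired_lift σ⟩
  rw [signedSum_eq_sum_paired, hpaired, sum_map]
  simp [sign_lift_symm_trans_lift, Nat.card_eq_fintype_card, Fintype.card_subtype]

theorem natAbs_signedSum [Fintype Q] (hN : Fintype.card Q = N) {n : ℕ}
    (f : TwoLayer Q ≃ Fin n) :
    (signedSum f).natAbs = Nat.card {σ : Q ≃ Fin N // IsLinearExtension σ} := by
  obtain rfl : n = N * 2 := by simpa [card_eq, hN] using (Fintype.card_congr f).symm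
  rw [signedSum_eq_sign_mul f (lift (Fintype.equivFinOfCardEq hN)), signedSum_lift,
    Int.natAbs_mul, Int.units_natAbs, one_mul, Int.natAbs_natCast]

end TwoLayer

section ChainPlusPoint

variable {m : ℕ}

def insertAt (k : Fin (m + 1)) : Fin m ⊕ Unit ≃ Fin (m + 1) :=
  (optionEquivSumPUnit (Fin m)).symm.trans (finSuccEquiv' k).symm

@[simp]
theorem insertAt_inl (k : Fin (m + 1)) (i : Fin m) : insertAt k (.inl i) = k.succAbove i :=
  rfl

@[simp]
theorem insertAt_inr (k : Fin (m + 1)) : insertAt k (.inr ()) = k :=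
  rfl

theorem isLinearExtension_insertAt (k : Fin (m + 1)) : IsLinearExtension (insertAt k) := by
  rintro (a | ⟨⟩) (b | ⟨⟩) h <;> simp_all

theorem IsLinearExtension.eq_insertAt {σ : Fin m ⊕ Unit ≃ Fin (m + 1)}
    (hσ : IsLinearExtension σ) : σ = insertAt (σ (.inr ())) := by
  have hmono : StrictMono (σ ∘ .inl) := fun a b hab => hσ.strictMono (Sum.inl_lt_inl_iff.mpr hab)
  have hrange : Set.range (σ ∘ .inl) = Set.range (σ (.inr ())).succAbove := by
    rw [Fin.range_succAbove]
    ext y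
    simp only [Set.mem_range, Function.comp_apply, Set.mem_compl_iff, Set.mem_singleton_iff]
    constructor
    · rintro ⟨a, rfl⟩ h
      exact Sum.inl_ne_inr (σ.injective h)
    · intro hy
      rcases h : σ.symm y with a | ⟨⟩
      · exact ⟨a, by rw [← h, apply_symm_apply]⟩
      · exact absurd (by rw [← h, apply_symm_apply]) hy
  have hinl := (hmono.range_inj (Fin.strictMono_succAbove _)).mp hrange
  ext (a | ⟨⟩)
  · exact congrArg Fin.val (congrFun hinl a)
  · rfl

def linearExtensionsFinSumUnitEquiv :
    {σ : Fin m ⊕ Unit ≃ Fin (m + 1) // IsLinearExtension σ} ≃ Fin (m + 1) where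
  toFun σ := σ.1 (.inr ())
  invFun k := ⟨insertAt k, isLinearExtension_insertAt k⟩
  left_inv σ := Subtype.ext σ.2.eq_insertAt.symm
  right_inv := insertAt_inr

theorem card_linearExtensions_fin_sum_unit :
    Nat.card {σ : Fin m ⊕ Unit ≃ Fin (m + 1) // IsLinearExtension σ} = m + 1 :=
  (Nat.card_congr linearExtensionsFinSumUnitEquiv).trans (Nat.card_fin _)

end ChainPlusPoint

/-- For every positive integer `a` there exists a finite poset of height at most 2
with sign imbalance exactly `a`. -/
theorem exists_height2_poset_with_signImbalance (a : ℕ) (ha : 1 ≤ a) :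
    ∃ (α : Type) (i1 : Fintype α) (i2 : PartialOrder α),
      @IsHeight2WithSignImbalance a α i1 i2 := by
  obtain ⟨m, rfl⟩ : ∃ m, a = m + 1 := ⟨a - 1, by omega⟩
  refine ⟨TwoLayer (Fin m ⊕ Unit), inferInstance, inferInstance, TwoLayer.not_exists_lt_lt,
    fun f => ?_⟩
  rw [TwoLayer.natAbs_signedSum (N := m + 1) (by simp) f, card_linearExtensions_fin_sum_unit]
end
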